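/- arXiv:2307.09925 — 3 statements merged into one kernel-verified Lean document; each statement's English description precedes it below -/
import Mathlib

section
/- For all positive integers n and m, the number of extreme points of the flow polytope F_{G(n,m)}(1,0), where 1 = (1,…,1) ∈ ℕ^n and 0 = (0,…,0) ∈ ℕ^n, equals the number of plane partitions π of the staircase shape δ_n = (n, n−1, …, 1) with entries at most m satisfying both: (1) for all 1 ≤ j ≤ n−1 and all 1 ≤ i ≤ n−j, either π_{i,j+1} < π_{i+1,j} or π_{i,j+1} = π_{i,j}; and (2) for all 1 ≤ j ≤ n−1 and all 2 ≤ i ≤ n−j, if π_{i,j} = π_{i,j+1} then π_{i−1,j} = π_{i−1,j+1}. -/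
open scoped BigOperators Classical

namespace GPS

/-! ### Vectors in `ℕ^n`, dominance order, support vectors -/

/-- Partial sum `a 1 + ⋯ + a i` of the first `i` entries of `a ∈ ℕ^n`
(entries indexed by `Fin n`). -/
def psum {n : ℕ} (a : Fin n → ℕ) (i : ℕ) : ℕ :=
  ∑ k : Fin n, if (k : ℕ) < i then a k else 0

/-- `a` dominates `b`: all partial sums of `a` are at least those of `b`. -/
def Dominates {n : ℕ} (a b : Fin n → ℕ) : Prop :=
  ∀ i : ℕ, psum b i ≤ psum a i

/-- The 0/1 vector `χ(u)` with the same support as `u`. -/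
def chi {n : ℕ} (u : Fin n → ℕ) : Fin n → ℕ := fun i => if u i = 0 then 0 else 1

/-- `z(u,w) ≤ z`: `u ⊵ w`, `χ(u) ⊵ χ(w)`, and the zeros of `u` can be matched
injectively to zeros of `w`, each zero position `i` of `u` matched to a zero
position `j` of `w` with `j ≤ i ≤ j + z`.  (This is equivalent to the greedy
matching `M` of the zeros having `i - j ≤ z` for all `(i,j) ∈ M`.)
In particular `DomZle 1 u w` is the relation `u ⊵₁ w`. -/
def DomZle {n : ℕ} (z : ℕ) (u w : Fin n → ℕ) : Prop :=
  Dominates u w ∧ Dominates (chi u) (chi w) ∧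
  ∃ φ : Fin n → Fin n, Set.InjOn φ { i | u i = 0 } ∧
    ∀ i, u i = 0 → w (φ i) = 0 ∧ (φ i : ℕ) ≤ (i : ℕ) ∧ (i : ℕ) ≤ (φ i : ℕ) + z

/-! ### The grid graph `G(n,m)` and its flow polytope -/

/-- Vertices of the graph `G(n,m)`: the grid vertices `(i,j)` for `1 ≤ i ≤ n`,
`0 ≤ j ≤ m` (encoded as `some (i,j)` with `i : Fin n`, `j : Fin (m+1)`)
together with the sink `s` (encoded as `none`). -/
abbrev Vtx (n m : ℕ) := Option (Fin n × Fin (m + 1))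

/-- Edges of `G(n,m)`: horizontal edges `(i,j) → (i,j+1)`, vertical edges
`(i,j) → (i+1,j)`, and the edges `(n,j) → s`. -/
def IsEdge (n m : ℕ) : Vtx n m → Vtx n m → Prop
  | some (i, j), some (i', j') =>
      (i = i' ∧ (j' : ℕ) = (j : ℕ) + 1) ∨ ((i' : ℕ) = (i : ℕ) + 1 ∧ j = j')
  | some (i, _), none => (i : ℕ) = n - 1
  | none, _ => False

/-- The netflow vector for `F_{G(n,m)}(a,b)`: vertex `(i,0)` has netflow `a i`,
vertex `(i,m)` has netflow `-b i`, interior vertices have netflow `0`, and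
the sink has netflow `-∑ (a i - b i)`. -/
noncomputable def netflow (n m : ℕ) (a b : Fin n → ℕ) : Vtx n m → ℝ
  | some (i, j) =>
      (if (j : ℕ) = 0 then (a i : ℝ) else 0) - (if (j : ℕ) = m then (b i : ℝ) else 0)
  | none => -∑ i : Fin n, ((a i : ℝ) - (b i : ℝ))

/-- The flow polytope `F_{G(n,m)}(a,b)`: nonnegative functions on the edges of
`G(n,m)` (encoded as functions on pairs of vertices vanishing off the edges)
with outflow minus inflow equal to the netflow at every vertex. -/
def FlowPolytope (n m : ℕ) (a b : Fin n → ℕ) : Set (Vtx n m → Vtx n m → ℝ) :=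
  { f | (∀ u v, ¬ IsEdge n m u v → f u v = 0) ∧
        (∀ u v, 0 ≤ f u v) ∧
        (∀ u, (∑ v, f u v) - (∑ v, f v u) = netflow n m a b u) }

/-- An integer flow: a flow taking integer values on all edges. -/
def IsIntegerFlow {n m : ℕ} (f : Vtx n m → Vtx n m → ℝ) : Prop :=
  ∀ u v, ∃ z : ℤ, f u v = z

/-- `x` is an extreme point (vertex) of `P`: `x ∈ P` and `x` is not the midpoint
of two distinct points of `P`. -/
def IsExtremePt {E : Type*} [AddCommGroup E] [Module ℝ E] (P : Set E) (x : E) : Prop :=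
  x ∈ P ∧ ∀ y ∈ P, ∀ z ∈ P, x = (2 : ℝ)⁻¹ • (y + z) → y = z

/-- An unsplittable flow: each vertex has at most one outgoing edge with positive
flow, and no vertex with negative netflow has positive flow on an outgoing edge. -/
def IsUnsplittable (n m : ℕ) (a b : Fin n → ℕ) (f : Vtx n m → Vtx n m → ℝ) : Prop :=
  (∀ u v w, 0 < f u v → 0 < f u w → v = w) ∧
  (∀ u, netflow n m a b u < 0 → ∀ v, f u v = 0)

/-- The number of vertices (extreme points) of `F_{G(n,m)}(a,b)`,
denoted `v^{(n,m)}(a,b)`. -/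
noncomputable def numVertices (n m : ℕ) (a b : Fin n → ℕ) : ℕ :=
  Set.ncard { f | IsExtremePt (FlowPolytope n m a b) f }

/-- The number of unsplittable integer flows in `F_{G(n,m)}(a,b)`,
denoted `v_unsplit^{(n,m)}(a,b)`. -/
noncomputable def vUnsplit (n m : ℕ) (a b : Fin n → ℕ) : ℕ :=
  Set.ncard { f | f ∈ FlowPolytope n m a b ∧ IsIntegerFlow f ∧ IsUnsplittable n m a b f }

end GPS
/-! ### Skew shapes and plane partitions -/

namespace GPS

/-- The partition `λ(a) = (a_1+⋯+a_n, …, a_1+a_2, a_1)`, with rows indexed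
`1,…,n` (so `lamOf n a i = a_1 + ⋯ + a_{n+1-i}`). -/
def lamOf (n : ℕ) (a : Fin n → ℕ) : ℕ → ℕ := fun i => psum a (n + 1 - i)

/-- `(i,j)` is a cell of the skew shape `λ/μ` (with `n` rows, rows and columns
indexed from 1): `1 ≤ i ≤ n` and `μ_i < j ≤ λ_i`. -/
def IsCellOf (n : ℕ) (lam mu : ℕ → ℕ) (i j : ℕ) : Prop :=
  1 ≤ i ∧ i ≤ n ∧ mu i < j ∧ j ≤ lam i

/-- A plane partition of skew shape `λ/μ` with entries in `{0,1,…,m}`: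
an array vanishing outside the shape, with entries at most `m`, weakly
decreasing along rows and columns. -/
def IsSkewPP (n m : ℕ) (lam mu : ℕ → ℕ) (π : ℕ → ℕ → ℕ) : Prop :=
  (∀ i j, ¬ IsCellOf n lam mu i j → π i j = 0) ∧
  (∀ i j, IsCellOf n lam mu i j → π i j ≤ m) ∧
  (∀ i j, IsCellOf n lam mu i j → IsCellOf n lam mu i (j + 1) → π i (j + 1) ≤ π i j) ∧
  (∀ i j, IsCellOf n lam mu i j → IsCellOf n lam mu (i + 1) j → π (i + 1) j ≤ π i j)

/-- The conjugate partition: `conjOf n λ j = #{1 ≤ i ≤ n : λ_i ≥ j}`. -/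
def conjOf (n : ℕ) (lam : ℕ → ℕ) (j : ℕ) : ℕ :=
  ((Finset.Icc 1 n).filter fun i => j ≤ lam i).card

/-- A vertex plane partition of shape `λ/μ` with entries at most `m`
(Definition 4.5 of the paper). -/
def IsVertexPP (n m : ℕ) (lam mu : ℕ → ℕ) (π : ℕ → ℕ → ℕ) : Prop :=
  IsSkewPP n m lam mu π ∧
  ∀ j : ℕ, 1 ≤ j →
    conjOf n mu j < conjOf n lam j → conjOf n mu (j + 1) < conjOf n lam (j + 1) →
    -- (i) `μ'_j = μ'_{j+1}` and `λ'_j = λ'_{j+1}`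
    ((conjOf n mu j = conjOf n mu (j + 1) ∧ conjOf n lam j = conjOf n lam (j + 1) →
        ∀ i, π i j = π i (j + 1)) ∧
     -- (ii) `μ'_j = μ'_{j+1}` and `λ'_j > λ'_{j+1}`
     (conjOf n mu j = conjOf n mu (j + 1) ∧ conjOf n lam (j + 1) < conjOf n lam j →
        (∀ i, conjOf n mu (j + 1) + 2 ≤ i → i ≤ conjOf n lam (j + 1) →
          π i j = π i (j + 1) → π (i - 1) j = π (i - 1) (j + 1)) ∧
        (∀ i, conjOf n mu (j + 1) + 1 ≤ i → i ≤ conjOf n lam (j + 1) →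
          π i (j + 1) < π (i + 1) j ∨ π i (j + 1) = π i j)) ∧
     -- (iii) `λ'_j = λ'_{j+1}` and `μ'_j > μ'_{j+1}`
     (conjOf n lam j = conjOf n lam (j + 1) ∧ conjOf n mu (j + 1) < conjOf n mu j →
        (∀ i, conjOf n mu j + 1 ≤ i → i ≤ conjOf n lam j - 1 →
          π i j = π i (j + 1) → π (i + 1) j = π (i + 1) (j + 1)) ∧
        (∀ i, conjOf n mu j ≤ i → i ≤ conjOf n lam j - 1 →
          π i (j + 1) < π (i + 1) j ∨ π (i + 1) j = π (i + 1) (j + 1))) ∧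
     -- (iv) `μ'_j ≠ μ'_{j+1}` and `λ'_j ≠ λ'_{j+1}`
     (conjOf n mu j ≠ conjOf n mu (j + 1) ∧ conjOf n lam j ≠ conjOf n lam (j + 1) →
        ∀ imin imax : ℕ,
          ((IsCellOf n lam mu imin j ∧ IsCellOf n lam mu (imin - 1) (j + 1) ∧
              π imin j ≤ π (imin - 1) (j + 1)) ∧
            (∀ i, (IsCellOf n lam mu i j ∧ IsCellOf n lam mu (i - 1) (j + 1) ∧
              π i j ≤ π (i - 1) (j + 1)) → imin ≤ i)) →
          ((IsCellOf n lam mu (imax + 1) j ∧ IsCellOf n lam mu imax (j + 1) ∧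
              π (imax + 1) j ≤ π imax (j + 1)) ∧
            (∀ i, (IsCellOf n lam mu (i + 1) j ∧ IsCellOf n lam mu i (j + 1) ∧
              π (i + 1) j ≤ π i (j + 1)) → i ≤ imax)) →
          imin < imax → ∀ i, imin ≤ i → i ≤ imax → π i j = π i (j + 1)))

end GPS
/-! ### The graph `H_⊤(n)`, the matrix `A_n`, and general flow polytopes -/

namespace GPS

/-- Vertices of `H_⊤(n)`: `(i,-1), (i,0), (i,1)` for `1 ≤ i ≤ n` (encoded as
`some (i,j)` with `j : Fin 3` standing for levels `-1, 0, 1`) and a sink `s`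
(encoded as `none`). -/
abbrev HVtx (n : ℕ) := Option (Fin n × Fin 3)

/-- Edges of `H_⊤(n)`: `(i,-1) → (i,0)`, `(i,0) → (i,1)`, `(i,0) → (i+1,0)`,
and `(n,0) → s`. -/
def HIsEdge (n : ℕ) : HVtx n → HVtx n → Prop
  | some (i, j), some (i', j') =>
      (i = i' ∧ (j' : ℕ) = (j : ℕ) + 1) ∨
      ((j : ℕ) = 1 ∧ (j' : ℕ) = 1 ∧ (i' : ℕ) = (i : ℕ) + 1)
  | some (i, j), none => (j : ℕ) = 1 ∧ (i : ℕ) = n - 1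
  | none, _ => False

/-- The netflows for `F_{H_⊤(n)}(a,b)`: `(i,-1)` has netflow `a i`, `(i,1)` has
netflow `-b i`, `(i,0)` has netflow `0`, and the sink has `-∑ (a i - b i)`. -/
noncomputable def Hnetflow (n : ℕ) (a b : Fin n → ℕ) : HVtx n → ℝ
  | some (i, j) =>
      (if (j : ℕ) = 0 then (a i : ℝ) else 0) - (if (j : ℕ) = 2 then (b i : ℝ) else 0)
  | none => -∑ i : Fin n, ((a i : ℝ) - (b i : ℝ))

/-- The flow polytope `F_{H_⊤(n)}(a,b)`. -/
def FHtop (n : ℕ) (a b : Fin n → ℕ) : Set (HVtx n → HVtx n → ℝ) :=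
  { f | (∀ u v, ¬ HIsEdge n u v → f u v = 0) ∧
        (∀ u v, 0 ≤ f u v) ∧
        (∀ u, (∑ v, f u v) - (∑ v, f v u) = Hnetflow n a b u) }

/-- An unsplittable flow on `H_⊤(n)`. -/
def HUnsplittable (n : ℕ) (a b : Fin n → ℕ) (f : HVtx n → HVtx n → ℝ) : Prop :=
  (∀ u v w, 0 < f u v → 0 < f u w → v = w) ∧
  (∀ u, Hnetflow n a b u < 0 → ∀ v, f u v = 0)

/-- The `2^n × 2^n` matrix `A_n`, with rows and columns indexed by `{0,1}^n`,
whose `(j,k)` entry is `1` if `j ⊵₁ k` and `0` otherwise. -/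
noncomputable def An (n : ℕ) : Matrix (Fin n → Fin 2) (Fin n → Fin 2) ℤ :=
  Matrix.of fun j k =>
    if DomZle 1 (fun i => (j i : ℕ)) (fun i => (k i : ℕ)) then 1 else 0

/-- The support vector `χ(u)` as an element of `{0,1}^n` (encoded `Fin n → Fin 2`). -/
def chi2 {n : ℕ} (u : Fin n → ℕ) : Fin n → Fin 2 := fun i => if u i = 0 then 0 else 1

/-- The flow polytope `F_G(c)` of a directed graph on vertex set `Fin (N+1)`
with edge relation `E` and netflow vector `c`. -/
def FlowPolyGen (N : ℕ) (E : Fin (N + 1) → Fin (N + 1) → Prop)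
    (c : Fin (N + 1) → ℤ) : Set (Fin (N + 1) → Fin (N + 1) → ℝ) :=
  { f | (∀ u v, ¬ E u v → f u v = 0) ∧
        (∀ u v, 0 ≤ f u v) ∧
        (∀ u, (∑ v, f u v) - (∑ v, f v u) = (c u : ℝ)) }

end GPS
namespace GPS

/-! ### Auxiliary development for Statement 7 -/

section Statement7Proof

variable {n m : ℕ}

/-- Value of `f` on the horizontal edge `(i,c) → (i,c+1)` (0-indexed), `0` out of range. -/
noncomputable def Hval (n m : ℕ) (f : Vtx n m → Vtx n m → ℝ) (i c : ℕ) : ℝ :=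
  if h : i < n ∧ c < m then
    f (some (⟨i, h.1⟩, ⟨c, by omega⟩)) (some (⟨i, h.1⟩, ⟨c + 1, by omega⟩))
  else 0

/-- Value of `f` on the "downward" edge leaving `(i,c)`: either `(i,c) → (i+1,c)` or,
for the last row, `(i,c) → s`. -/
noncomputable def Vval (n m : ℕ) (f : Vtx n m → Vtx n m → ℝ) (i c : ℕ) : ℝ :=
  if h : i + 1 < n ∧ c < m + 1 then
    f (some (⟨i, by omega⟩, ⟨c, h.2⟩)) (some (⟨i + 1, h.1⟩, ⟨c, h.2⟩))
  else if h : i + 1 = n ∧ c < m + 1 then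
    f (some (⟨i, by omega⟩, ⟨c, h.2⟩)) none
  else 0

lemma Hval_nonneg {f : Vtx n m → Vtx n m → ℝ} (hf : ∀ u v, 0 ≤ f u v) (i c : ℕ) :
    0 ≤ Hval n m f i c := by
  unfold Hval; split_ifs <;> first | exact hf _ _ | exact le_rfl
lemma Vval_nonneg {f : Vtx n m → Vtx n m → ℝ} (hf : ∀ u v, 0 ≤ f u v) (i c : ℕ) :
    0 ≤ Vval n m f i c := by
  unfold Vval; split_ifs <;> first | exact hf _ _ | exact le_rfl

lemma sum_coord (g : Fin n × Fin (m + 1) → ℝ) (a b : ℕ) :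
    ∑ p : Fin n × Fin (m + 1), (if (p.1 : ℕ) = a ∧ (p.2 : ℕ) = b then g p else 0)
      = if h : a < n ∧ b < m + 1 then g (⟨a, h.1⟩, ⟨b, h.2⟩) else 0 := by
  split_ifs with h
  · have hpt : ∀ p : Fin n × Fin (m + 1),
        (if (p.1 : ℕ) = a ∧ (p.2 : ℕ) = b then g p else 0)
          = (if p = (⟨a, h.1⟩, ⟨b, h.2⟩) then g p else 0) := by
      intro p
      have hiff : ((p.1 : ℕ) = a ∧ (p.2 : ℕ) = b) ↔ p = (⟨a, h.1⟩, ⟨b, h.2⟩) := by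
        constructor
        · rintro ⟨h1, h2⟩; exact Prod.ext (Fin.ext h1) (Fin.ext h2)
        · rintro rfl; exact ⟨rfl, rfl⟩
      rw [if_congr hiff rfl rfl]
    rw [Finset.sum_congr rfl fun p _ => hpt p, Finset.sum_ite_eq' Finset.univ _ g]
    simp
  · apply Finset.sum_eq_zero
    intro p _
    rw [if_neg]
    rintro ⟨h1, h2⟩
    exact h ⟨h1 ▸ p.1.isLt, h2 ▸ p.2.isLt⟩

lemma sum_coord1 (g : Fin n → ℝ) (a : ℕ) :
    ∑ i : Fin n, (if (i : ℕ) = a then g i else 0) = if h : a < n then g ⟨a, h⟩ else 0 := by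
  split_ifs with h
  · have hpt : ∀ i : Fin n, (if (i : ℕ) = a then g i else 0)
        = (if i = ⟨a, h⟩ then g i else 0) := by
      intro i
      have hiff : ((i : ℕ) = a) ↔ i = ⟨a, h⟩ := ⟨fun h1 => Fin.ext h1, fun h1 => h1 ▸ rfl⟩
      rw [if_congr hiff rfl rfl]
    rw [Finset.sum_congr rfl fun p _ => hpt p, Finset.sum_ite_eq' Finset.univ _ g]
    simp
  · apply Finset.sum_eq_zero
    intro i _
    rw [if_neg]
    intro h1
    exact h (h1 ▸ i.isLt)

lemma sum_out (f : Vtx n m → Vtx n m → ℝ)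
    (h0 : ∀ u v, ¬ IsEdge n m u v → f u v = 0) (i : Fin n) (j : Fin (m + 1)) :
    ∑ v, f (some (i, j)) v = Hval n m f i j + Vval n m f i j := by
  set u : Vtx n m := some (i, j) with hu
  have hsplit : ∀ p : Fin n × Fin (m + 1), f u (some p)
      = (if (p.1 : ℕ) = (i : ℕ) ∧ (p.2 : ℕ) = (j : ℕ) + 1 then f u (some p) else 0)
        + (if (p.1 : ℕ) = (i : ℕ) + 1 ∧ (p.2 : ℕ) = (j : ℕ) then f u (some p) else 0) := by
    rintro ⟨p1, p2⟩
    dsimp only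
    by_cases h1 : ((p1 : ℕ) = (i : ℕ) ∧ (p2 : ℕ) = (j : ℕ) + 1 : Prop)
    · rw [if_pos h1, if_neg (by omega), add_zero]
    · by_cases h2 : ((p1 : ℕ) = (i : ℕ) + 1 ∧ (p2 : ℕ) = (j : ℕ) : Prop)
      · rw [if_neg h1, if_pos h2, zero_add]
      · rw [if_neg h1, if_neg h2, h0 u (some (p1, p2)), add_zero]
        rintro (⟨hh1, hh2⟩ | ⟨hh1, hh2⟩)
        · exact h1 ⟨by rw [hh1], hh2⟩
        · exact h2 ⟨hh1, by rw [hh2]⟩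
  rw [Fintype.sum_option]
  rw [Finset.sum_congr rfl fun p _ => hsplit p, Finset.sum_add_distrib,
    sum_coord (fun p => f u (some p)) (i : ℕ) ((j : ℕ) + 1),
    sum_coord (fun p => f u (some p)) ((i : ℕ) + 1) (j : ℕ)]
  have hVval : f u none + (if h : (i : ℕ) + 1 < n ∧ (j : ℕ) < m + 1
      then f u (some (⟨(i : ℕ) + 1, h.1⟩, ⟨(j : ℕ), h.2⟩)) else 0) = Vval n m f i j := by
    rcases (by omega : (i : ℕ) + 1 < n ∨ (i : ℕ) + 1 = n) with hlt | heq
    · rw [h0 u none (by simp only [hu, IsEdge]; omega)]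
      rw [dif_pos ⟨hlt, j.isLt⟩]
      rw [Vval, dif_pos ⟨hlt, j.isLt⟩, zero_add]
    · rw [dif_neg (by omega)]
      rw [Vval, dif_neg (by omega), dif_pos ⟨heq, j.isLt⟩, add_zero]
  have hHval : (if h : (i : ℕ) < n ∧ (j : ℕ) + 1 < m + 1
      then f u (some (⟨(i : ℕ), h.1⟩, ⟨(j : ℕ) + 1, h.2⟩)) else 0) = Hval n m f i j := by
    rw [Hval]
    by_cases hj : (j : ℕ) < m
    · rw [dif_pos ⟨i.isLt, by omega⟩, dif_pos ⟨i.isLt, hj⟩]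
    · rw [dif_neg (by omega), dif_neg (by omega)]
  rw [← hHval, ← hVval]; ring

lemma sum_in (f : Vtx n m → Vtx n m → ℝ)
    (h0 : ∀ u v, ¬ IsEdge n m u v → f u v = 0) (i : Fin n) (j : Fin (m + 1)) :
    ∑ v, f v (some (i, j))
      = (if 0 < (j : ℕ) then Hval n m f i ((j : ℕ) - 1) else 0)
        + (if 0 < (i : ℕ) then Vval n m f ((i : ℕ) - 1) j else 0) := by
  set u : Vtx n m := some (i, j) with hu
  have hsplit : ∀ p : Fin n × Fin (m + 1), f (some p) u
      = (if (p.1 : ℕ) = (i : ℕ) ∧ (p.2 : ℕ) + 1 = (j : ℕ) then f (some p) u else 0)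
        + (if (p.1 : ℕ) + 1 = (i : ℕ) ∧ (p.2 : ℕ) = (j : ℕ) then f (some p) u else 0) := by
    rintro ⟨p1, p2⟩
    dsimp only
    by_cases h1 : ((p1 : ℕ) = (i : ℕ) ∧ (p2 : ℕ) + 1 = (j : ℕ) : Prop)
    · rw [if_pos h1, if_neg (by omega), add_zero]
    · by_cases h2 : ((p1 : ℕ) + 1 = (i : ℕ) ∧ (p2 : ℕ) = (j : ℕ) : Prop)
      · rw [if_neg h1, if_pos h2, zero_add]
      · rw [if_neg h1, if_neg h2, h0 (some (p1, p2)) u, add_zero]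
        rintro (⟨hh1, hh2⟩ | ⟨hh1, hh2⟩)
        · exact h1 ⟨by rw [hh1], by omega⟩
        · exact h2 ⟨by omega, by rw [hh2]⟩
  rw [Fintype.sum_option]
  rw [h0 none u (by simp [IsEdge]), zero_add]
  rw [Finset.sum_congr rfl fun p _ => hsplit p, Finset.sum_add_distrib]
  congr 1
  · by_cases hj : 0 < (j : ℕ)
    · have hpt : ∀ p : Fin n × Fin (m + 1),
          (if (p.1 : ℕ) = (i : ℕ) ∧ (p.2 : ℕ) + 1 = (j : ℕ) then f (some p) u else 0)
            = (if (p.1 : ℕ) = (i : ℕ) ∧ (p.2 : ℕ) = (j : ℕ) - 1 then f (some p) u else 0) := by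
        intro p
        rw [if_congr (show ((p.1 : ℕ) = (i : ℕ) ∧ (p.2 : ℕ) + 1 = (j : ℕ)) ↔
          ((p.1 : ℕ) = (i : ℕ) ∧ (p.2 : ℕ) = (j : ℕ) - 1) by omega) rfl rfl]
      rw [Finset.sum_congr rfl fun p _ => hpt p,
        sum_coord (fun p => f (some p) u) (i : ℕ) ((j : ℕ) - 1)]
      rw [if_pos hj, dif_pos ⟨i.isLt, by omega⟩, Hval, dif_pos ⟨i.isLt, by omega⟩]
      have : (j : ℕ) - 1 + 1 = (j : ℕ) := by omega
      congr 2 <;> simp [hu, Fin.ext_iff, this]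
    · rw [if_neg hj]
      apply Finset.sum_eq_zero
      intro p _
      rw [if_neg (by omega)]
  · by_cases hi : 0 < (i : ℕ)
    · have hpt : ∀ p : Fin n × Fin (m + 1),
          (if (p.1 : ℕ) + 1 = (i : ℕ) ∧ (p.2 : ℕ) = (j : ℕ) then f (some p) u else 0)
            = (if (p.1 : ℕ) = (i : ℕ) - 1 ∧ (p.2 : ℕ) = (j : ℕ) then f (some p) u else 0) := by
        intro p
        rw [if_congr (show ((p.1 : ℕ) + 1 = (i : ℕ) ∧ (p.2 : ℕ) = (j : ℕ)) ↔
          ((p.1 : ℕ) = (i : ℕ) - 1 ∧ (p.2 : ℕ) = (j : ℕ)) by omega) rfl rfl]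
      rw [Finset.sum_congr rfl fun p _ => hpt p,
        sum_coord (fun p => f (some p) u) ((i : ℕ) - 1) (j : ℕ)]
      rw [if_pos hi, dif_pos ⟨by omega, j.isLt⟩, Vval, dif_pos ⟨by omega, j.isLt⟩]
      have : (i : ℕ) - 1 + 1 = (i : ℕ) := by omega
      congr 2 <;> simp [hu, Fin.ext_iff, this]
    · rw [if_neg hi]
      apply Finset.sum_eq_zero
      intro p _
      rw [if_neg (by omega)]

lemma sum_out_none (f : Vtx n m → Vtx n m → ℝ)
    (h0 : ∀ u v, ¬ IsEdge n m u v → f u v = 0) :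
    ∑ v, f (none : Vtx n m) v = 0 :=
  Finset.sum_eq_zero fun v _ => h0 none v (by simp [IsEdge])

lemma sum_in_none (hn : 0 < n) (f : Vtx n m → Vtx n m → ℝ)
    (h0 : ∀ u v, ¬ IsEdge n m u v → f u v = 0) :
    ∑ v, f v (none : Vtx n m) = ∑ c ∈ Finset.range (m + 1), Vval n m f (n - 1) c := by
  rw [Fintype.sum_option, h0 none none (by simp [IsEdge]), zero_add]
  have hsplit : ∀ p : Fin n × Fin (m + 1), f (some p) none
      = (if (p.1 : ℕ) = n - 1 then f (some p) none else 0) := by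
    rintro ⟨p1, p2⟩
    dsimp only
    by_cases h1 : ((p1 : ℕ) = n - 1 : Prop)
    · rw [if_pos h1]
    · rw [if_neg h1, h0 (some (p1, p2)) none]
      exact h1
  rw [Finset.sum_congr rfl fun p _ => hsplit p]
  rw [Fintype.sum_prod_type]
  have houter : ∀ a : Fin n, ∑ b : Fin (m + 1),
      (if (a : ℕ) = n - 1 then f (some (a, b)) none else 0)
        = (if (a : ℕ) = n - 1 then ∑ b : Fin (m + 1), f (some (a, b)) none else 0) := by
    intro a; by_cases ha : (a : ℕ) = n - 1 <;> simp [ha]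
  rw [Finset.sum_congr rfl fun a _ => houter a,
    sum_coord1 (fun a => ∑ b : Fin (m + 1), f (some (a, b)) none) (n - 1),
    dif_pos (by omega)]
  rw [← Fin.sum_univ_eq_sum_range (fun c => Vval n m f (n - 1) c) (m + 1)]
  apply Finset.sum_congr rfl
  intro b _
  rw [Vval, dif_neg (by omega), dif_pos ⟨by omega, b.isLt⟩]

/-- Topological order on the vertices of `G(n,m)`. -/
def ordV (n m : ℕ) : Vtx n m → ℕ
  | none => n * (m + 1)
  | some (i, j) => (i : ℕ) * (m + 1) + (j : ℕ)

/-- Every vertex has at most one outgoing edge carrying positive flow. -/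
def UnsplitOut (f : Vtx n m → Vtx n m → ℝ) : Prop :=
  ∀ u v w, 0 < f u v → 0 < f u w → v = w

lemma ordV_lt_of_edge {u v : Vtx n m} (h : IsEdge n m u v) : ordV n m u < ordV n m v := by
  match u, v with
  | some (i, j), some (i', j') =>
    rcases h with ⟨h1, h2⟩ | ⟨h1, h2⟩
    · subst h1
      simp only [ordV]
      omega
    · have h2' : (j : ℕ) = (j' : ℕ) := by rw [h2]
      have h3 : (i' : ℕ) * (m + 1) = (i : ℕ) * (m + 1) + (m + 1) := by rw [h1]; ring
      have h4 := j.isLt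
      simp only [ordV]
      omega
  | some (i, j), none =>
    have h1 : (i : ℕ) = n - 1 := h
    have h2 : 0 < n := i.pos
    have h3 : (i : ℕ) * (m + 1) = (n - 1) * (m + 1) := by rw [h1]
    have h4 : n * (m + 1) = (n - 1) * (m + 1) + (m + 1) := by
      have h : n = (n - 1) + 1 := by omega
      calc n * (m + 1) = ((n - 1) + 1) * (m + 1) := by rw [← h]
        _ = (n - 1) * (m + 1) + (m + 1) := by ring
    have h5 := j.isLt
    simp only [ordV]
    omega
  | none, v => exact absurd h (by simp [IsEdge])

lemma ordV_grid_lt (i : Fin n) (j : Fin (m + 1)) :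
    ordV n m (some (i, j)) < n * (m + 1) := by
  have h1 : ((i : ℕ) + 1) * (m + 1) ≤ n * (m + 1) := Nat.mul_le_mul_right _ i.isLt
  have h2 : ((i : ℕ) + 1) * (m + 1) = (i : ℕ) * (m + 1) + (m + 1) := by ring
  have h3 := j.isLt
  simp only [ordV]
  omega

lemma netflow_grid_eq (i : Fin n) (j : Fin (m + 1)) :
    netflow n m (fun _ => 1) (fun _ => 0) (some (i, j))
      = if (j : ℕ) = 0 then (1 : ℝ) else 0 := by
  show ((if (j : ℕ) = 0 then ((1 : ℕ) : ℝ) else 0) - (if (j : ℕ) = m then ((0 : ℕ) : ℝ) else 0)) = _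
  split_ifs <;> norm_num

lemma flow_determined {f g : Vtx n m → Vtx n m → ℝ}
    (hf : f ∈ FlowPolytope n m (fun _ => 1) (fun _ => 0))
    (hg : g ∈ FlowPolytope n m (fun _ => 1) (fun _ => 0))
    (hU : UnsplitOut f)
    (hsupp : ∀ u v, f u v = 0 → g u v = 0) : g = f := by
  obtain ⟨hf0, hfnn, hfc⟩ := hf
  obtain ⟨hg0, hgnn, hgc⟩ := hg
  have key : ∀ N : ℕ, ∀ u : Vtx n m, ordV n m u < N → u ≠ none → ∀ v, g u v = f u v := by
    intro N
    induction N with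
    | zero => intro u h; omega
    | succ N IH =>
      intro u hN hne v
      match u with
      | none => exact absurd rfl hne
      | some (i, j) =>
        have hin : ∀ w, g w (some (i, j)) = f w (some (i, j)) := by
          intro w
          by_cases hE : IsEdge n m w (some (i, j))
          · have hlt := ordV_lt_of_edge hE
            have hwne : w ≠ none := by
              match w with
              | some _ => simp
              | none => simp [IsEdge] at hE
            exact IH w (by omega) hwne _
          · rw [hf0 _ _ hE, hg0 _ _ hE]
        have hsums : ∑ v, g (some (i, j)) v = ∑ v, f (some (i, j)) v := by
          have e1 := hfc (some (i, j))
          have e2 := hgc (some (i, j))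
          have e3 : ∑ w, g w (some (i, j)) = ∑ w, f w (some (i, j)) :=
            Finset.sum_congr rfl fun w _ => hin w
          rw [e3] at e2
          linarith
        by_cases hpos : ∃ e, 0 < f (some (i, j)) e
        · obtain ⟨e, he⟩ := hpos
          have hz : ∀ w, w ≠ e → f (some (i, j)) w = 0 := by
            intro w hw
            rcases (hfnn (some (i, j)) w).lt_or_eq with hlt | heq
            · exact absurd (hU _ _ _ hlt he) hw
            · exact heq.symm
          have hze : ∀ w, w ≠ e → g (some (i, j)) w = 0 := fun w hw => hsupp _ _ (hz w hw)
          by_cases hve : v = e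
          · subst hve
            have h1 : ∑ w, g (some (i, j)) w = g (some (i, j)) v :=
              Finset.sum_eq_single v (fun b _ hb => hze b hb)
                (fun h => absurd (Finset.mem_univ v) h)
            have h2 : ∑ w, f (some (i, j)) w = f (some (i, j)) v :=
              Finset.sum_eq_single v (fun b _ hb => hz b hb)
                (fun h => absurd (Finset.mem_univ v) h)
            rw [← h1, ← h2, hsums]
          · rw [hze v hve, hz v hve]
        · push_neg at hpos
          have hzf : ∀ w, f (some (i, j)) w = 0 := fun w => le_antisymm (hpos w) (hfnn _ w)
          rw [hsupp _ _ (hzf v), hzf v]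
  funext u v
  match u with
  | none => rw [hg0 none v (by simp [IsEdge]), hf0 none v (by simp [IsEdge])]
  | some (i, j) => exact key (n * (m + 1)) _ (ordV_grid_lt i j) (by simp) v

lemma extreme_of_unsplit {f : Vtx n m → Vtx n m → ℝ}
    (hf : f ∈ FlowPolytope n m (fun _ => 1) (fun _ => 0)) (hU : UnsplitOut f) :
    IsExtremePt (FlowPolytope n m (fun _ => 1) (fun _ => 0)) f := by
  refine ⟨hf, fun y hy z hz hmid => ?_⟩
  have hpt : ∀ u v, f u v = 2⁻¹ * (y u v + z u v) := by
    intro u v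
    have := congrFun (congrFun hmid u) v
    simpa [Pi.smul_apply, Pi.add_apply, smul_eq_mul] using this
  have hy0 : ∀ u v, f u v = 0 → y u v = 0 := by
    intro u v h
    have h1 := hpt u v
    have h2 := hy.2.1 u v
    have h3 := hz.2.1 u v
    linarith
  have hz0 : ∀ u v, f u v = 0 → z u v = 0 := by
    intro u v h
    have h1 := hpt u v
    have h2 := hy.2.1 u v
    have h3 := hz.2.1 u v
    linarith
  rw [flow_determined hf hy hU hy0, flow_determined hf hz hU hz0]

lemma path_build {f : Vtx n m → Vtx n m → ℝ}
    (hf0 : ∀ u v, ¬ IsEdge n m u v → f u v = 0)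
    (hfnn : ∀ u v, 0 ≤ f u v)
    (hfc : ∀ u, (∑ v, f u v) - (∑ v, f v u) = netflow n m (fun _ => 1) (fun _ => 0) u) :
    ∀ t (u : Vtx n m), n * (m + 1) ≤ ordV n m u + t →
      (u = none ∨ 0 < ∑ v, f v u) →
      ∃ p : Vtx n m → Vtx n m → ℝ,
        (∀ a b, p a b ≠ 0 → 0 < f a b) ∧
        (∀ a b, p a b = 0 ∨ p a b = 1) ∧
        (∀ a, (∑ b, p a b) - (∑ b, p b a)
            = (if a = u then 1 else 0) - (if a = none then 1 else 0)) ∧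
        (∀ a b, p a b ≠ 0 → ordV n m u ≤ ordV n m a) := by
  have base : ∃ p : Vtx n m → Vtx n m → ℝ,
      (∀ a b, p a b ≠ 0 → 0 < f a b) ∧
      (∀ a b, p a b = 0 ∨ p a b = 1) ∧
      (∀ a, (∑ b, p a b) - (∑ b, p b a)
          = (if a = (none : Vtx n m) then 1 else 0) - (if a = none then 1 else 0)) ∧
      (∀ a b, p a b ≠ 0 → ordV n m (none : Vtx n m) ≤ ordV n m a) := by
    refine ⟨fun _ _ => 0, by simp, fun a b => Or.inl rfl, by simp, by simp⟩
  intro t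
  induction t with
  | zero =>
    intro u hord _
    have hu : u = none := by
      match u with
      | none => rfl
      | some (i, j) => exact absurd (ordV_grid_lt i j) (by omega)
    subst hu
    exact base
  | succ t IH =>
    intro u hord hin
    match u with
    | none => exact base
    | some (i, j) =>
      rcases hin with h | hin
      · exact absurd h (by simp)
      have hout : 0 < ∑ v, f (some (i, j)) v := by
        have e1 := hfc (some (i, j))
        have hnf : (0 : ℝ) ≤ netflow n m (fun _ => 1) (fun _ => 0) (some (i, j)) := by
          rw [netflow_grid_eq]
          split_ifs <;> norm_num
        linarith
      obtain ⟨w, hw⟩ : ∃ w, 0 < f (some (i, j)) w := by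
        by_contra hcon
        push_neg at hcon
        have : ∑ v, f (some (i, j)) v ≤ 0 :=
          Finset.sum_nonpos fun v _ => hcon v
        linarith
      have hEdge : IsEdge n m (some (i, j)) w := by
        by_contra hc
        rw [hf0 _ _ hc] at hw
        exact lt_irrefl 0 hw
      have hordw : ordV n m (some (i, j)) < ordV n m w := ordV_lt_of_edge hEdge
      have hinw : 0 < ∑ v, f v w :=
        lt_of_lt_of_le hw (Finset.single_le_sum (fun v _ => hfnn v w) (Finset.mem_univ _))
      obtain ⟨p, hp1, hp2, hp3, hp4⟩ := IH w (by omega) (Or.inr hinw)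
      refine ⟨fun a b => p a b + (if a = some (i, j) ∧ b = w then 1 else 0), ?_, ?_, ?_, ?_⟩
      · intro a b hab
        dsimp only at hab
        by_cases hc : a = some (i, j) ∧ b = w
        · obtain ⟨rfl, rfl⟩ := hc
          exact hw
        · rw [if_neg hc, add_zero] at hab
          exact hp1 a b hab
      · intro a b
        dsimp only
        by_cases ha : a = some (i, j)
        · have hpz : p a b = 0 := by
            by_contra hcon
            have h1 := hp4 a b hcon
            rw [ha] at h1
            omega
          rw [hpz, zero_add]
          split_ifs
          · right; rfl
          · left; rfl
        · rw [if_neg (fun hc => ha hc.1), add_zero]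
          exact hp2 a b
      · intro a
        dsimp only
        have hsing1 : ∑ b, (if a = some (i, j) ∧ b = w then (1 : ℝ) else 0)
            = if a = some (i, j) then 1 else 0 := by
          by_cases ha : a = some (i, j) <;> simp [ha]
        have hsing2 : ∑ b, (if b = some (i, j) ∧ a = w then (1 : ℝ) else 0)
            = if a = w then 1 else 0 := by
          by_cases ha : a = w <;> simp [ha]
        have hre : (∑ b, (p a b + if a = some (i, j) ∧ b = w then (1 : ℝ) else 0))
              - (∑ b, (p b a + if b = some (i, j) ∧ a = w then (1 : ℝ) else 0))
            = ((∑ b, p a b) - (∑ b, p b a))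
              + ((∑ b, (if a = some (i, j) ∧ b = w then (1 : ℝ) else 0))
                - (∑ b, (if b = some (i, j) ∧ a = w then (1 : ℝ) else 0))) := by
          rw [Finset.sum_add_distrib, Finset.sum_add_distrib]
          ring
        rw [hre, hsing1, hsing2, hp3 a]
        have hwnone : (if a = w then (1 : ℝ) else 0) - (if a = none then 1 else 0)
            + ((if a = some (i, j) then 1 else 0) - (if a = w then 1 else 0))
            = (if a = some (i, j) then 1 else 0) - (if a = none then 1 else 0) := by ring
        linarith [hwnone]
      · intro a b hab
        dsimp only at hab
        by_cases hc : a = some (i, j) ∧ b = w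
        · rw [hc.1]
        · rw [if_neg hc, add_zero] at hab
          exact le_trans (le_of_lt hordw) (hp4 a b hab)

lemma unsplit_of_extreme {f : Vtx n m → Vtx n m → ℝ}
    (hX : IsExtremePt (FlowPolytope n m (fun _ => 1) (fun _ => 0)) f) : UnsplitOut f := by
  obtain ⟨hf, hext⟩ := hX
  obtain ⟨hf0, hfnn, hfc⟩ := hf
  intro u v w hv hw
  by_contra hne
  have hEv : IsEdge n m u v := by
    by_contra hc; rw [hf0 _ _ hc] at hv; exact lt_irrefl 0 hv
  have hEw : IsEdge n m u w := by
    by_contra hc; rw [hf0 _ _ hc] at hw; exact lt_irrefl 0 hw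
  have hordv := ordV_lt_of_edge hEv
  have hordw := ordV_lt_of_edge hEw
  have hinv : 0 < ∑ x, f x v :=
    lt_of_lt_of_le hv (Finset.single_le_sum (fun x _ => hfnn x v) (Finset.mem_univ _))
  have hinw : 0 < ∑ x, f x w :=
    lt_of_lt_of_le hw (Finset.single_le_sum (fun x _ => hfnn x w) (Finset.mem_univ _))
  obtain ⟨p1, h11, h12, h13, h14⟩ :=
    path_build hf0 hfnn hfc (n * (m + 1)) v (by omega) (Or.inr hinv)
  obtain ⟨p2, h21, h22, h23, h24⟩ :=
    path_build hf0 hfnn hfc (n * (m + 1)) w (by omega) (Or.inr hinw)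
  set q1 : Vtx n m → Vtx n m → ℝ :=
    fun a b => p1 a b + (if a = u ∧ b = v then 1 else 0) with hq1
  set q2 : Vtx n m → Vtx n m → ℝ :=
    fun a b => p2 a b + (if a = u ∧ b = w then 1 else 0) with hq2
  set c : Vtx n m → Vtx n m → ℝ := fun a b => q1 a b - q2 a b with hc
  have hq1ab : ∀ a b, q1 a b = p1 a b + (if a = u ∧ b = v then (1 : ℝ) else 0) := fun _ _ => rfl
  have hq2ab : ∀ a b, q2 a b = p2 a b + (if a = u ∧ b = w then (1 : ℝ) else 0) := fun _ _ => rfl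
  have hcab : ∀ a b, c a b = q1 a b - q2 a b := fun _ _ => rfl
  have hp1u : ∀ b, p1 u b = 0 := by
    intro b
    by_contra hcon
    have := h14 u b hcon
    omega
  have hp2u : ∀ b, p2 u b = 0 := by
    intro b
    by_contra hcon
    have := h24 u b hcon
    omega
  have hq1vals : ∀ a b, q1 a b = 0 ∨ q1 a b = 1 := by
    intro a b
    rw [hq1ab a b]
    by_cases ha : a = u
    · subst ha
      rw [hp1u b, zero_add]
      split_ifs
      · right; rfl
      · left; rfl
    · rw [if_neg (show ¬(a = u ∧ b = v) from fun hh => ha hh.1), add_zero]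
      exact h12 a b
  have hq2vals : ∀ a b, q2 a b = 0 ∨ q2 a b = 1 := by
    intro a b
    rw [hq2ab a b]
    by_cases ha : a = u
    · subst ha
      rw [hp2u b, zero_add]
      split_ifs
      · right; rfl
      · left; rfl
    · rw [if_neg (show ¬(a = u ∧ b = w) from fun hh => ha hh.1), add_zero]
      exact h22 a b
  have hq1supp : ∀ a b, q1 a b ≠ 0 → 0 < f a b := by
    intro a b hab
    by_cases hcc : a = u ∧ b = v
    · obtain ⟨rfl, rfl⟩ := hcc; exact hv
    · rw [hq1ab a b, if_neg hcc, add_zero] at hab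
      exact h11 a b hab
  have hq2supp : ∀ a b, q2 a b ≠ 0 → 0 < f a b := by
    intro a b hab
    by_cases hcc : a = u ∧ b = w
    · obtain ⟨rfl, rfl⟩ := hcc; exact hw
    · rw [hq2ab a b, if_neg hcc, add_zero] at hab
      exact h21 a b hab
  have hcsupp : ∀ a b, c a b ≠ 0 → 0 < f a b := by
    intro a b hab
    by_cases hz1 : q1 a b = 0
    · by_cases hz2 : q2 a b = 0
      · exfalso; apply hab; rw [hcab a b, hz1, hz2]; ring
      · exact hq2supp a b hz2
    · exact hq1supp a b hz1
  have hq1cons : ∀ a, (∑ b, q1 a b) - (∑ b, q1 b a)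
      = (if a = u then 1 else 0) - (if a = none then 1 else 0) := by
    intro a
    have hsing1 : ∑ b, (if a = u ∧ b = v then (1 : ℝ) else 0) = if a = u then 1 else 0 := by
      by_cases ha : a = u <;> simp [ha]
    have hsing2 : ∑ b, (if b = u ∧ a = v then (1 : ℝ) else 0) = if a = v then 1 else 0 := by
      by_cases ha : a = v <;> simp [ha]
    rw [Finset.sum_congr rfl fun b _ => hq1ab a b, Finset.sum_congr rfl fun b _ => hq1ab b a,
      Finset.sum_add_distrib, Finset.sum_add_distrib, hsing1, hsing2]
    have h13a := h13 a
    have : (if a = v then (1:ℝ) else 0) - (if a = none then 1 else 0)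
        + ((if a = u then 1 else 0) - (if a = v then 1 else 0))
        = (if a = u then 1 else 0) - (if a = none then 1 else 0) := by ring
    linarith
  have hq2cons : ∀ a, (∑ b, q2 a b) - (∑ b, q2 b a)
      = (if a = u then 1 else 0) - (if a = none then 1 else 0) := by
    intro a
    have hsing1 : ∑ b, (if a = u ∧ b = w then (1 : ℝ) else 0) = if a = u then 1 else 0 := by
      by_cases ha : a = u <;> simp [ha]
    have hsing2 : ∑ b, (if b = u ∧ a = w then (1 : ℝ) else 0) = if a = w then 1 else 0 := by
      by_cases ha : a = w <;> simp [ha]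
    rw [Finset.sum_congr rfl fun b _ => hq2ab a b, Finset.sum_congr rfl fun b _ => hq2ab b a,
      Finset.sum_add_distrib, Finset.sum_add_distrib, hsing1, hsing2]
    have h23a := h23 a
    have : (if a = w then (1:ℝ) else 0) - (if a = none then 1 else 0)
        + ((if a = u then 1 else 0) - (if a = w then 1 else 0))
        = (if a = u then 1 else 0) - (if a = none then 1 else 0) := by ring
    linarith
  have hccons : ∀ a, (∑ b, c a b) - (∑ b, c b a) = 0 := by
    intro a
    have e1 := hq1cons a
    have e2 := hq2cons a
    rw [Finset.sum_congr rfl fun b _ => hcab a b, Finset.sum_congr rfl fun b _ => hcab b a,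
      Finset.sum_sub_distrib, Finset.sum_sub_distrib]
    linarith
  have hcv : c u v = 1 := by
    have hq1uv : q1 u v = 1 := by
      rw [hq1ab, hp1u v, zero_add, if_pos (show u = u ∧ v = v from ⟨rfl, rfl⟩)]
    have hq2uv : q2 u v = 0 := by
      rw [hq2ab, hp2u v, zero_add,
        if_neg (show ¬(u = u ∧ v = w) from fun hh => hne hh.2)]
    rw [hcab, hq1uv, hq2uv]; ring
  set S : Finset (Vtx n m × Vtx n m) := Finset.univ.filter fun e => c e.1 e.2 ≠ 0 with hS
  have hSne : S.Nonempty := ⟨(u, v), by simp [hS, hcv]⟩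
  set ε : ℝ := S.inf' hSne (fun e => f e.1 e.2) with hε
  have hεpos : 0 < ε := by
    rw [hε, Finset.lt_inf'_iff]
    intro e he
    rw [hS] at he
    exact hcsupp e.1 e.2 (Finset.mem_filter.mp he).2
  have hεle : ∀ a b, c a b ≠ 0 → ε ≤ f a b := by
    intro a b h
    exact Finset.inf'_le _ (show (a, b) ∈ S from by
      rw [hS]; exact Finset.mem_filter.mpr ⟨Finset.mem_univ _, h⟩)
  have hcbound : ∀ a b, -1 ≤ c a b ∧ c a b ≤ 1 := by
    intro a b
    rcases hq1vals a b with h1 | h1 <;> rcases hq2vals a b with h2 | h2 <;>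
      · rw [hcab a b, h1, h2]; norm_num
  set y : Vtx n m → Vtx n m → ℝ := fun a b => f a b + ε * c a b with hy
  set z : Vtx n m → Vtx n m → ℝ := fun a b => f a b - ε * c a b with hz
  have hyab : ∀ a b, y a b = f a b + ε * c a b := fun _ _ => rfl
  have hzab : ∀ a b, z a b = f a b - ε * c a b := fun _ _ => rfl
  have hcz : ∀ a b, ¬ IsEdge n m a b → c a b = 0 := by
    intro a b hE
    by_contra hcon
    have := hcsupp a b hcon
    rw [hf0 a b hE] at this
    exact lt_irrefl 0 this
  have hymem : y ∈ FlowPolytope n m (fun _ => 1) (fun _ => 0) := by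
    refine ⟨?_, ?_, ?_⟩
    · intro a b hE
      rw [hyab a b, hf0 a b hE, hcz a b hE]; ring
    · intro a b
      by_cases hc0 : c a b = 0
      · rw [hyab a b, hc0, mul_zero, add_zero]; exact hfnn a b
      · have h1 := hεle a b hc0
        have h2 := (hcbound a b).1
        rw [hyab a b]
        nlinarith
    · intro a
      rw [Finset.sum_congr rfl fun b _ => hyab a b, Finset.sum_congr rfl fun b _ => hyab b a,
        Finset.sum_add_distrib, Finset.sum_add_distrib, ← Finset.mul_sum, ← Finset.mul_sum]
      have e1 := hfc a
      have e2 := hccons a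
      have e4 : ε * (∑ b, c a b) - ε * (∑ b, c b a) = 0 := by
        rw [← mul_sub, e2, mul_zero]
      linarith
  have hzmem : z ∈ FlowPolytope n m (fun _ => 1) (fun _ => 0) := by
    refine ⟨?_, ?_, ?_⟩
    · intro a b hE
      rw [hzab a b, hf0 a b hE, hcz a b hE]; ring
    · intro a b
      by_cases hc0 : c a b = 0
      · rw [hzab a b, hc0, mul_zero, sub_zero]; exact hfnn a b
      · have h1 := hεle a b hc0
        have h2 := (hcbound a b).2
        rw [hzab a b]
        nlinarith
    · intro a
      rw [Finset.sum_congr rfl fun b _ => hzab a b, Finset.sum_congr rfl fun b _ => hzab b a,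
        Finset.sum_sub_distrib, Finset.sum_sub_distrib, ← Finset.mul_sum, ← Finset.mul_sum]
      have e1 := hfc a
      have e2 := hccons a
      have e4 : ε * (∑ b, c a b) - ε * (∑ b, c b a) = 0 := by
        rw [← mul_sub, e2, mul_zero]
      linarith
  have hmid : f = (2 : ℝ)⁻¹ • (y + z) := by
    funext a b
    rw [Pi.smul_apply, Pi.smul_apply, Pi.add_apply, Pi.add_apply]
    rw [hyab a b, hzab a b]
    simp only [smul_eq_mul]
    ring
  have hyz := hext y hymem z hzmem hmid
  have heq := congrFun (congrFun hyz u) v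
  rw [hyab u v, hzab u v, hcv] at heq
  linarith

/-! ### Exit columns and stream drop columns -/

lemma Hval_m (f : Vtx n m → Vtx n m → ℝ) (i : ℕ) : Hval n m f i m = 0 := by
  rw [Hval, dif_neg (fun h => lt_irrefl m h.2)]

lemma exC_exists (f : Vtx n m → Vtx n m → ℝ) (i c : ℕ) :
    ∃ d, c ≤ d ∧ ¬ 0 < Hval n m f i d := by
  refine ⟨max c m, le_max_left _ _, ?_⟩
  rw [Hval, dif_neg fun h => absurd h.2 (not_lt.mpr (le_max_right c m))]
  exact lt_irrefl 0

/-- The exit column: least `d ≥ c` such that the horizontal flow out of `(i,d)` is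
not positive. -/
noncomputable def exC (n m : ℕ) (f : Vtx n m → Vtx n m → ℝ) (i c : ℕ) : ℕ :=
  Nat.find (exC_exists f i c)

lemma exC_ge (f : Vtx n m → Vtx n m → ℝ) (i c : ℕ) : c ≤ exC n m f i c :=
  (Nat.find_spec (exC_exists f i c)).1

lemma exC_not (f : Vtx n m → Vtx n m → ℝ) (i c : ℕ) :
    ¬ 0 < Hval n m f i (exC n m f i c) :=
  (Nat.find_spec (exC_exists f i c)).2

lemma exC_min {f : Vtx n m → Vtx n m → ℝ} {i c d : ℕ} (h1 : c ≤ d)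
    (h2 : d < exC n m f i c) : 0 < Hval n m f i d := by
  by_contra h
  exact Nat.find_min (exC_exists f i c) h2 ⟨h1, h⟩

lemma exC_le_of {f : Vtx n m → Vtx n m → ℝ} {i c d : ℕ} (h1 : c ≤ d)
    (h2 : ¬ 0 < Hval n m f i d) : exC n m f i c ≤ d :=
  Nat.find_le ⟨h1, h2⟩

lemma exC_le_m {f : Vtx n m → Vtx n m → ℝ} {i c : ℕ} (hc : c ≤ m) : exC n m f i c ≤ m :=
  exC_le_of hc (by rw [Hval_m]; exact lt_irrefl 0)

lemma exC_eq_self {f : Vtx n m → Vtx n m → ℝ} {i c : ℕ} (h : ¬ 0 < Hval n m f i c) :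
    exC n m f i c = c :=
  le_antisymm (exC_le_of le_rfl h) (exC_ge f i c)

lemma exC_congr {f : Vtx n m → Vtx n m → ℝ} {i c c' : ℕ} (h1 : c ≤ c')
    (h2 : c' ≤ exC n m f i c) : exC n m f i c' = exC n m f i c := by
  apply le_antisymm
  · exact exC_le_of h2 (exC_not f i c)
  · by_contra hcon
    push_neg at hcon
    exact exC_not f i c' (exC_min (le_trans h1 (exC_ge f i c')) hcon)

lemma exC_mono {f : Vtx n m → Vtx n m → ℝ} {i c c' : ℕ} (h : c ≤ c') :
    exC n m f i c ≤ exC n m f i c' := by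
  by_cases h2 : c' ≤ exC n m f i c
  · rw [exC_congr h h2]
  · push_neg at h2
    exact le_trans (le_of_lt h2) (exC_ge f i c')

/-- Iterated exit columns: `Drow f k t` is the column where the stream started at
source `k` (0-indexed) leaves row `k + t`. -/
noncomputable def Drow (n m : ℕ) (f : Vtx n m → Vtx n m → ℝ) (k : ℕ) : ℕ → ℕ
  | 0 => exC n m f k 0
  | t + 1 => exC n m f (k + t + 1) (Drow n m f k t)

/-- `Dcol f k i`: the column where the stream from source `k` leaves row `i` (`k ≤ i`). -/
noncomputable def Dcol (n m : ℕ) (f : Vtx n m → Vtx n m → ℝ) (k i : ℕ) : ℕ :=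
  Drow n m f k (i - k)

lemma Dcol_self (f : Vtx n m → Vtx n m → ℝ) (k : ℕ) : Dcol n m f k k = exC n m f k 0 := by
  rw [Dcol, Nat.sub_self]
  simp [Drow]

lemma Dcol_step {f : Vtx n m → Vtx n m → ℝ} {k i : ℕ} (h : k ≤ i) :
    Dcol n m f k (i + 1) = exC n m f (i + 1) (Dcol n m f k i) := by
  have h1 : i + 1 - k = (i - k) + 1 := by omega
  have h2 : Drow n m f k ((i - k) + 1) = exC n m f (k + (i - k) + 1) (Drow n m f k (i - k)) := rfl
  rw [Dcol, Dcol, h1, h2]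
  congr 2
  omega

lemma Dcol_le_m (f : Vtx n m → Vtx n m → ℝ) (k i : ℕ) : Dcol n m f k i ≤ m := by
  rw [Dcol]
  generalize i - k = t
  induction t with
  | zero => exact exC_le_m (Nat.zero_le m)
  | succ t IH => exact exC_le_m IH

lemma Dcol_mono {f : Vtx n m → Vtx n m → ℝ} {k i : ℕ} (h : k ≤ i) :
    Dcol n m f k i ≤ Dcol n m f k (i + 1) := by
  rw [Dcol_step h]
  exact exC_ge f (i + 1) _

lemma Dcol_anti {f : Vtx n m → Vtx n m → ℝ} {k k' i : ℕ} (hkk : k ≤ k') (hki : k' ≤ i) :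
    Dcol n m f k' i ≤ Dcol n m f k i := by
  rcases eq_or_lt_of_le hkk with rfl | hlt
  · exact le_rfl
  · induction i, hki using Nat.le_induction with
    | base =>
      rw [Dcol_self]
      have h1 : Dcol n m f k k' = exC n m f k' (Dcol n m f k (k' - 1)) := by
        have h2 := Dcol_step (f := f) (k := k) (i := k' - 1) (by omega)
        rw [show (k' - 1) + 1 = k' from by omega] at h2
        exact h2
      rw [h1]
      exact exC_mono (Nat.zero_le _)
    | succ i hki IH =>
      rw [Dcol_step (show k ≤ i by omega), Dcol_step (show k' ≤ i by omega)]
      exact exC_mono IH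

lemma Dcol_merge {f : Vtx n m → Vtx n m → ℝ} {k r : ℕ} (hk : k + 1 ≤ r) :
    Dcol n m f (k + 1) r < Dcol n m f k (r - 1) ∨ Dcol n m f (k + 1) r = Dcol n m f k r := by
  by_cases h : Dcol n m f (k + 1) r < Dcol n m f k (r - 1)
  · exact Or.inl h
  · push_neg at h
    right
    have hDk : Dcol n m f k r = exC n m f r (Dcol n m f k (r - 1)) := by
      have h2 := Dcol_step (f := f) (k := k) (i := r - 1) (by omega)
      rw [show (r - 1) + 1 = r from by omega] at h2
      exact h2
    rcases eq_or_lt_of_le hk with heq | hlt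
    · -- r = k + 1, the stream k+1 starts in row r at column 0
      have hD1 : Dcol n m f (k + 1) r = exC n m f r 0 := by
        rw [← heq, Dcol_self]
      rw [hDk, hD1]
      exact (exC_congr (Nat.zero_le _) (by rw [← hD1]; exact h)).symm
    · -- k + 1 < r
      have hD1 : Dcol n m f (k + 1) r = exC n m f r (Dcol n m f (k + 1) (r - 1)) := by
        have h2 := Dcol_step (f := f) (k := k + 1) (i := r - 1) (by omega)
        rw [show (r - 1) + 1 = r from by omega] at h2
        exact h2
      have he : Dcol n m f (k + 1) (r - 1) ≤ Dcol n m f k (r - 1) :=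
        Dcol_anti (by omega) (by omega)
      rw [hDk, hD1]
      exact (exC_congr he (by rw [← hD1]; exact h)).symm

/-! ### The set of plane partitions in the statement -/

/-- The set of plane partitions appearing on the right-hand side of Statement 7. -/
def PPset (n m : ℕ) : Set (ℕ → ℕ → ℕ) :=
  { π : ℕ → ℕ → ℕ |
    IsSkewPP n m (fun i => n + 1 - i) (fun _ => 0) π ∧
    (∀ j, 1 ≤ j → j ≤ n - 1 → ∀ i, 1 ≤ i → i ≤ n - j →
      (π i (j + 1) < π (i + 1) j ∨ π i (j + 1) = π i j)) ∧
    (∀ j, 1 ≤ j → j ≤ n - 1 → ∀ i, 2 ≤ i → i ≤ n - j →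
      (π i j = π i (j + 1) → π (i - 1) j = π (i - 1) (j + 1))) }

lemma cell_iff (i j : ℕ) :
    IsCellOf n (fun a => n + 1 - a) (fun _ => 0) i j ↔
      (1 ≤ i ∧ i ≤ n ∧ 1 ≤ j ∧ i + j ≤ n + 1) := by
  unfold IsCellOf
  dsimp only
  omega

/-- Condition (2) follows from condition (1) and column-monotonicity. -/
lemma cond2_of_cond1 {π : ℕ → ℕ → ℕ}
    (hSkew : IsSkewPP n m (fun a => n + 1 - a) (fun _ => 0) π)
    (h1 : ∀ j, 1 ≤ j → j ≤ n - 1 → ∀ i, 1 ≤ i → i ≤ n - j →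
      (π i (j + 1) < π (i + 1) j ∨ π i (j + 1) = π i j)) :
    ∀ j, 1 ≤ j → j ≤ n - 1 → ∀ i, 2 ≤ i → i ≤ n - j →
      (π i j = π i (j + 1) → π (i - 1) j = π (i - 1) (j + 1)) := by
  intro j hj1 hj2 i hi2 hin heq
  have h1' := h1 j hj1 hj2 (i - 1) (by omega) (by omega)
  rw [show i - 1 + 1 = i from by omega] at h1'
  have hcol := hSkew.2.2.2 (i - 1) (j + 1)
    ((cell_iff _ _).mpr (by omega)) ((cell_iff _ _).mpr (by omega))
  rw [show i - 1 + 1 = i from by omega] at hcol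
  rcases h1' with hlt | heq2
  · omega
  · exact heq2.symm

/-! ### The `x`-array of a plane partition, 0-indexed -/

/-- `xv π i k`: the drop column of stream `k` in row `i` (both 0-indexed),
read off from the plane partition `π`. -/
def xv (n : ℕ) (π : ℕ → ℕ → ℕ) (i k : ℕ) : ℕ := π (n - i) (k + 1)

/-- `ev π i k`: the entry column of stream `k` into row `i`. -/
def ev (n : ℕ) (π : ℕ → ℕ → ℕ) (i k : ℕ) : ℕ :=
  if k < i then xv n π (i - 1) k else 0

lemma xv_le {π : ℕ → ℕ → ℕ} (hπ : π ∈ PPset n m) (i k : ℕ) : xv n π i k ≤ m := by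
  by_cases hcell : IsCellOf n (fun a => n + 1 - a) (fun _ => 0) (n - i) (k + 1)
  · exact hπ.1.2.1 _ _ hcell
  · rw [xv, hπ.1.1 _ _ hcell]
    exact Nat.zero_le m

lemma xv_anti {π : ℕ → ℕ → ℕ} (hπ : π ∈ PPset n m) {i k k' : ℕ}
    (hk : k ≤ k') (hk' : k' ≤ i) (hi : i < n) : xv n π i k' ≤ xv n π i k := by
  induction k', hk using Nat.le_induction with
  | base => exact le_rfl
  | succ k'' hk'' IH =>
    have hstep : xv n π i (k'' + 1) ≤ xv n π i k'' := by
      have := hπ.1.2.2.1 (n - i) (k'' + 1)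
        ((cell_iff _ _).mpr (by omega)) ((cell_iff _ _).mpr (by omega))
      exact this
    exact le_trans hstep (IH (by omega))

lemma xv_col {π : ℕ → ℕ → ℕ} (hπ : π ∈ PPset n m) {i k : ℕ}
    (hk : k ≤ i) (hi : i + 1 < n) : xv n π i k ≤ xv n π (i + 1) k := by
  have hcol := hπ.1.2.2.2 (n - (i + 1)) (k + 1)
    ((cell_iff _ _).mpr (by omega)) ((cell_iff _ _).mpr (by omega))
  rw [show n - (i + 1) + 1 = n - i from by omega] at hcol
  exact hcol

lemma ev_le_xv {π : ℕ → ℕ → ℕ} (hπ : π ∈ PPset n m) {i k : ℕ}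
    (hk : k ≤ i) (hi : i < n) : ev n π i k ≤ xv n π i k := by
  rw [ev]
  split_ifs with h
  · have := xv_col hπ (show k ≤ i - 1 by omega) (show i - 1 + 1 < n by omega)
    rw [show i - 1 + 1 = i from by omega] at this
    exact this
  · exact Nat.zero_le _

lemma ev_anti {π : ℕ → ℕ → ℕ} (hπ : π ∈ PPset n m) {i k k' : ℕ}
    (hk : k ≤ k') (hk' : k' ≤ i) (hi : i < n) : ev n π i k' ≤ ev n π i k := by
  rw [ev, ev]
  split_ifs with h1 h2 h2
  · exact xv_anti hπ hk (by omega) (by omega)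
  · omega
  · exact Nat.zero_le _
  · exact Nat.zero_le _

lemma adjC {π : ℕ → ℕ → ℕ} (hπ : π ∈ PPset n m) {i k : ℕ}
    (hk : k + 1 ≤ i) (hi : i < n) (h : ev n π i k ≤ xv n π i (k + 1)) :
    xv n π i (k + 1) = xv n π i k := by
  have hmain := hπ.2.1 (k + 1) (by omega) (by omega) (n - i) (by omega) (by omega)
  have hev : ev n π i k = π (n - i + 1) (k + 1) := by
    rw [ev, if_pos (by omega), xv, show n - (i - 1) = n - i + 1 from by omega]
  rcases hmain with hlt | heq
  · exfalso
    rw [show n - i + 1 = n - i + 1 from rfl] at hlt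
    have : xv n π i (k + 1) < ev n π i k := by
      rw [hev]
      exact hlt
    omega
  · exact heq

lemma claimA {π : ℕ → ℕ → ℕ} (hπ : π ∈ PPset n m) :
    ∀ d k k'' i, i < n → k'' ≤ i → k ≤ k'' → k'' - k ≤ d →
      ev n π i k ≤ xv n π i k'' → xv n π i k = xv n π i k'' := by
  intro d
  induction d with
  | zero =>
    intro k k'' i _ _ h1 h2 _
    rw [show k = k'' from by omega]
  | succ d IH =>
    intro k k'' i hi hk''i hkk hd h
    by_cases hkeq : k = k''
    · rw [hkeq]
    · have hlt : k < k'' := by omega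
      have h1 : ev n π i k ≤ xv n π i (k + 1) :=
        le_trans h (xv_anti hπ (by omega) hk''i hi)
      have h2 := adjC hπ (by omega) hi h1
      have h3 : ev n π i (k + 1) ≤ xv n π i k'' :=
        le_trans (ev_anti hπ (by omega) (by omega) hi) h
      have h4 := IH (k + 1) k'' i hi hk''i (by omega) (by omega) h3
      rw [← h2, h4]

lemma nocross {π : ℕ → ℕ → ℕ} (hπ : π ∈ PPset n m) {i k k' c : ℕ}
    (hi : i < n) (hk : k ≤ i) (hk' : k' ≤ i)
    (h1 : ev n π i k' ≤ c) (h2 : c < xv n π i k') (h3 : xv n π i k = c) : False := by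
  rcases le_or_gt k' k with hle | hlt
  · have := claimA hπ (k - k') k' k i hi hk hle le_rfl (by omega)
    omega
  · have := xv_anti hπ (le_of_lt hlt) hk' hi
    omega

/-! ### The flow associated with a plane partition -/

/-- Number of streams crossing the horizontal edge `(i,c) → (i,c+1)`. -/
def HcN (n : ℕ) (π : ℕ → ℕ → ℕ) (i c : ℕ) : ℕ :=
  ∑ k ∈ Finset.range n, if k ≤ i ∧ ev n π i k ≤ c ∧ c < xv n π i k then 1 else 0

/-- Number of streams dropping out of row `i` at column `c`. -/
def VcN (n : ℕ) (π : ℕ → ℕ → ℕ) (i c : ℕ) : ℕ :=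
  ∑ k ∈ Finset.range n, if k ≤ i ∧ xv n π i k = c then 1 else 0

/-- The unsplittable flow associated with a plane partition. -/
noncomputable def flowOf (n m : ℕ) (π : ℕ → ℕ → ℕ) : Vtx n m → Vtx n m → ℝ := fun u v =>
  match u, v with
  | some (i, j), some (i', j') =>
      (if (i' : ℕ) = (i : ℕ) ∧ (j' : ℕ) = (j : ℕ) + 1 then (HcN n π (i : ℕ) (j : ℕ) : ℝ) else 0)
      + (if (i' : ℕ) = (i : ℕ) + 1 ∧ (j' : ℕ) = (j : ℕ) then (VcN n π (i : ℕ) (j : ℕ) : ℝ) else 0)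
  | some (i, j), none => if (i : ℕ) = n - 1 then (VcN n π (i : ℕ) (j : ℕ) : ℝ) else 0
  | none, _ => 0

lemma flowOf_eval_ss (π : ℕ → ℕ → ℕ) (i i' : Fin n) (j j' : Fin (m + 1)) :
    flowOf n m π (some (i, j)) (some (i', j')) =
      (if (i' : ℕ) = (i : ℕ) ∧ (j' : ℕ) = (j : ℕ) + 1 then (HcN n π (i : ℕ) (j : ℕ) : ℝ) else 0)
      + (if (i' : ℕ) = (i : ℕ) + 1 ∧ (j' : ℕ) = (j : ℕ) then (VcN n π (i : ℕ) (j : ℕ) : ℝ) else 0) :=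
  rfl

lemma flowOf_eval_sn (π : ℕ → ℕ → ℕ) (i : Fin n) (j : Fin (m + 1)) :
    flowOf n m π (some (i, j)) none
      = if (i : ℕ) = n - 1 then (VcN n π (i : ℕ) (j : ℕ) : ℝ) else 0 := rfl

lemma flowOf_eval_n (π : ℕ → ℕ → ℕ) (v : Vtx n m) : flowOf n m π none v = 0 := rfl

lemma flowOf_off (π : ℕ → ℕ → ℕ) :
    ∀ u v, ¬ IsEdge n m u v → flowOf n m π u v = 0 := by
  intro u v hE
  match u, v with
  | none, v => exact flowOf_eval_n π v
  | some (i, j), some (i', j') =>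
    rw [flowOf_eval_ss,
      if_neg (fun hc => hE (Or.inl ⟨Fin.ext hc.1.symm, hc.2⟩)),
      if_neg (fun hc => hE (Or.inr ⟨hc.1, Fin.ext hc.2.symm⟩)), add_zero]
  | some (i, j), none =>
    rw [flowOf_eval_sn, if_neg (show ¬((i : ℕ) = n - 1) from fun hc => hE hc)]

lemma flowOf_nonneg (π : ℕ → ℕ → ℕ) : ∀ u v, 0 ≤ flowOf n m π u v := by
  intro u v
  match u, v with
  | none, v => rw [flowOf_eval_n]
  | some (i, j), some (i', j') =>
    rw [flowOf_eval_ss]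
    refine add_nonneg ?_ ?_ <;> · split_ifs <;> simp
  | some (i, j), none =>
    rw [flowOf_eval_sn]
    split_ifs <;> simp

lemma Hval_flowOf (π : ℕ → ℕ → ℕ) {i c : ℕ} (hi : i < n) (hc : c < m) :
    Hval n m (flowOf n m π) i c = (HcN n π i c : ℝ) := by
  rw [Hval, dif_pos ⟨hi, hc⟩, flowOf_eval_ss]
  rw [if_pos ⟨rfl, rfl⟩, if_neg (fun hcon => by
    have h1 : i = i + 1 := hcon.1
    omega), add_zero]

lemma Vval_flowOf (π : ℕ → ℕ → ℕ) {i c : ℕ} (hi : i < n) (hc : c ≤ m) :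
    Vval n m (flowOf n m π) i c = (VcN n π i c : ℝ) := by
  rcases (show i + 1 < n ∨ i + 1 = n by omega) with hlt | heq
  · rw [Vval, dif_pos ⟨hlt, by omega⟩, flowOf_eval_ss]
    rw [if_neg (fun hcon => by
      have h1 : i + 1 = i := hcon.1
      omega), if_pos ⟨rfl, rfl⟩, zero_add]
  · rw [Vval, dif_neg (by omega), dif_pos ⟨heq, by omega⟩, flowOf_eval_sn,
      if_pos (show i = n - 1 by omega)]

lemma sum_ind_pos {s : Finset ℕ} {P : ℕ → Prop} [DecidablePred P]
    (h : 0 < ∑ k ∈ s, if P k then 1 else 0) : ∃ k ∈ s, P k := by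
  by_contra hc
  push_neg at hc
  rw [Finset.sum_eq_zero (fun k hk => if_neg (hc k hk))] at h
  exact lt_irrefl 0 h

lemma HcN_pos {π : ℕ → ℕ → ℕ} {i c : ℕ} (h : 0 < HcN n π i c) :
    ∃ k, k < n ∧ k ≤ i ∧ ev n π i k ≤ c ∧ c < xv n π i k := by
  obtain ⟨k, hk, hp⟩ := sum_ind_pos (show 0 < ∑ k ∈ Finset.range n,
    if k ≤ i ∧ ev n π i k ≤ c ∧ c < xv n π i k then 1 else 0 from h)
  exact ⟨k, Finset.mem_range.mp hk, hp⟩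

lemma VcN_pos {π : ℕ → ℕ → ℕ} {i c : ℕ} (h : 0 < VcN n π i c) :
    ∃ k, k < n ∧ k ≤ i ∧ xv n π i k = c := by
  obtain ⟨k, hk, hp⟩ := sum_ind_pos (show 0 < ∑ k ∈ Finset.range n,
    if k ≤ i ∧ xv n π i k = c then 1 else 0 from h)
  exact ⟨k, Finset.mem_range.mp hk, hp.1, hp.2⟩

lemma HcN_has {π : ℕ → ℕ → ℕ} {i c k : ℕ} (hkn : k < n)
    (h : k ≤ i ∧ ev n π i k ≤ c ∧ c < xv n π i k) : 0 < HcN n π i c := by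
  have h1 := Finset.single_le_sum
    (f := fun k => if k ≤ i ∧ ev n π i k ≤ c ∧ c < xv n π i k then 1 else 0)
    (fun _ _ => Nat.zero_le _) (Finset.mem_range.mpr hkn)
  rw [if_pos h] at h1
  exact lt_of_lt_of_le Nat.zero_lt_one h1

lemma VcN_has {π : ℕ → ℕ → ℕ} {i c k : ℕ} (hkn : k < n)
    (h : k ≤ i ∧ xv n π i k = c) : 0 < VcN n π i c := by
  have h1 := Finset.single_le_sum
    (f := fun k => if k ≤ i ∧ xv n π i k = c then 1 else 0)
    (fun _ _ => Nat.zero_le _) (Finset.mem_range.mpr hkn)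
  rw [if_pos h] at h1
  exact lt_of_lt_of_le Nat.zero_lt_one h1

lemma HcN_m_eq {π : ℕ → ℕ → ℕ} (hπ : π ∈ PPset n m) (i : ℕ) : HcN n π i m = 0 :=
  Finset.sum_eq_zero fun k _ =>
    if_neg (fun hcond => absurd hcond.2.2 (not_lt.mpr (xv_le hπ i k)))

lemma flow_cons_nat {π : ℕ → ℕ → ℕ} (hπ : π ∈ PPset n m) {i c : ℕ}
    (hi : i < n) (hc : c ≤ m) :
    HcN n π i c + VcN n π i c
      = (if c = 0 then 1 else 0) + (if 0 < c then HcN n π i (c - 1) else 0)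
        + (if 0 < i then VcN n π (i - 1) c else 0) := by
  have hD : (if 0 < c then HcN n π i (c - 1) else 0)
      = ∑ k ∈ Finset.range n,
          if 0 < c ∧ k ≤ i ∧ ev n π i k ≤ c - 1 ∧ c - 1 < xv n π i k then 1 else 0 := by
    by_cases h : 0 < c <;> simp [HcN, h]
  have hE : (if 0 < i then VcN n π (i - 1) c else 0)
      = ∑ k ∈ Finset.range n,
          if 0 < i ∧ k ≤ i - 1 ∧ xv n π (i - 1) k = c then 1 else 0 := by
    by_cases h : 0 < i <;> simp [VcN, h]
  have hC : (if c = 0 then 1 else 0)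
      = ∑ k ∈ Finset.range n, if k = i ∧ c = 0 then 1 else 0 := by
    by_cases h : c = 0
    · rw [if_pos h]
      have hpt : ∀ k, (if k = i ∧ c = 0 then (1 : ℕ) else 0) = (if k = i then 1 else 0) :=
        fun k => if_congr (and_iff_left h) rfl rfl
      rw [Finset.sum_congr rfl fun k _ => hpt k,
        Finset.sum_ite_eq' (Finset.range n) i (fun _ => 1), if_pos (Finset.mem_range.mpr hi)]
    · rw [if_neg h]
      symm
      apply Finset.sum_eq_zero
      intro k _
      rw [if_neg (fun hcon => h hcon.2)]
  rw [HcN, VcN, hD, hE, hC, ← Finset.sum_add_distrib, ← Finset.sum_add_distrib,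
    ← Finset.sum_add_distrib]
  apply Finset.sum_congr rfl
  intro k _
  rcases lt_trichotomy k i with hki | hki | hki
  · have hEe : ev n π i k = xv n π (i - 1) k := by rw [ev, if_pos hki]
    have hEX : ev n π i k ≤ xv n π i k := ev_le_xv hπ (le_of_lt hki) hi
    split_ifs <;> omega
  · have hEe : ev n π i k = 0 := by rw [ev, if_neg (by omega)]
    have hEX : ev n π i k ≤ xv n π i k := ev_le_xv hπ (le_of_eq hki) hi
    split_ifs <;> omega
  · split_ifs <;> omega

lemma VcN_row_total {π : ℕ → ℕ → ℕ} (hπ : π ∈ PPset n m) (hn : 0 < n) :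
    ∑ c ∈ Finset.range (m + 1), VcN n π (n - 1) c = n := by
  have h1 : ∑ c ∈ Finset.range (m + 1), VcN n π (n - 1) c
      = ∑ k ∈ Finset.range n, ∑ c ∈ Finset.range (m + 1),
          (if k ≤ n - 1 ∧ xv n π (n - 1) k = c then 1 else 0) := by
    rw [← Finset.sum_comm]
    rfl
  rw [h1]
  have h2 : ∀ k ∈ Finset.range n, ∑ c ∈ Finset.range (m + 1),
      (if k ≤ n - 1 ∧ xv n π (n - 1) k = c then 1 else 0) = 1 := by
    intro k hk
    have hk' : k ≤ n - 1 := by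
      have := Finset.mem_range.mp hk
      omega
    have h3 : ∀ c, (if k ≤ n - 1 ∧ xv n π (n - 1) k = c then (1 : ℕ) else 0)
        = if xv n π (n - 1) k = c then 1 else 0 := by
      intro c
      rw [if_congr (and_iff_right hk') rfl rfl]
    rw [Finset.sum_congr rfl fun c _ => h3 c,
      Finset.sum_ite_eq (Finset.range (m + 1)) _ (fun _ => 1),
      if_pos (Finset.mem_range.mpr (by have := xv_le hπ (n - 1) k; omega))]
  rw [Finset.sum_congr rfl h2, Finset.sum_const, Finset.card_range, smul_eq_mul, mul_one]

lemma flowOf_mem {π : ℕ → ℕ → ℕ} (hn : 0 < n) (hπ : π ∈ PPset n m) :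
    flowOf n m π ∈ FlowPolytope n m (fun _ => 1) (fun _ => 0) := by
  refine ⟨flowOf_off π, flowOf_nonneg π, ?_⟩
  intro u
  match u with
  | some (i, j) =>
    rw [sum_out _ (flowOf_off π) i j, sum_in _ (flowOf_off π) i j, netflow_grid_eq]
    have hVv : Vval n m (flowOf n m π) (i : ℕ) (j : ℕ) = (VcN n π (i : ℕ) (j : ℕ) : ℝ) :=
      Vval_flowOf π i.isLt (by omega)
    have hHv : Hval n m (flowOf n m π) (i : ℕ) (j : ℕ) = (HcN n π (i : ℕ) (j : ℕ) : ℝ) := by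
      by_cases hjm : (j : ℕ) < m
      · exact Hval_flowOf π i.isLt hjm
      · have hm : (j : ℕ) = m := by omega
        rw [hm, Hval_m, HcN_m_eq hπ]
        norm_num
    have hHin : (if 0 < (j : ℕ) then Hval n m (flowOf n m π) (i : ℕ) ((j : ℕ) - 1) else 0)
        = (if 0 < (j : ℕ) then (HcN n π (i : ℕ) ((j : ℕ) - 1) : ℝ) else 0) := by
      by_cases hj : 0 < (j : ℕ)
      · rw [if_pos hj, if_pos hj, Hval_flowOf π i.isLt (by omega)]
      · rw [if_neg hj, if_neg hj]
    have hVin : (if 0 < (i : ℕ) then Vval n m (flowOf n m π) ((i : ℕ) - 1) (j : ℕ) else 0)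
        = (if 0 < (i : ℕ) then (VcN n π ((i : ℕ) - 1) (j : ℕ) : ℝ) else 0) := by
      by_cases hi : 0 < (i : ℕ)
      · rw [if_pos hi, if_pos hi, Vval_flowOf π (by omega) (by omega)]
      · rw [if_neg hi, if_neg hi]
    rw [hHv, hVv, hHin, hVin]
    have hnat := flow_cons_nat hπ i.isLt (show (j : ℕ) ≤ m by omega)
    have hreal : (HcN n π (i : ℕ) (j : ℕ) : ℝ) + (VcN n π (i : ℕ) (j : ℕ) : ℝ)
        = (if (j : ℕ) = 0 then 1 else 0)
          + (if 0 < (j : ℕ) then (HcN n π (i : ℕ) ((j : ℕ) - 1) : ℝ) else 0)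
          + (if 0 < (i : ℕ) then (VcN n π ((i : ℕ) - 1) (j : ℕ) : ℝ) else 0) := by
      exact_mod_cast congrArg (Nat.cast : ℕ → ℝ) hnat
    linarith
  | none =>
    rw [sum_out_none _ (flowOf_off π), sum_in_none hn _ (flowOf_off π)]
    have h1 : ∑ c ∈ Finset.range (m + 1), Vval n m (flowOf n m π) (n - 1) c
        = ∑ c ∈ Finset.range (m + 1), (VcN n π (n - 1) c : ℝ) :=
      Finset.sum_congr rfl fun c hc =>
        Vval_flowOf π (by omega) (by have := Finset.mem_range.mp hc; omega)
    have h2 : ∑ c ∈ Finset.range (m + 1), (VcN n π (n - 1) c : ℝ) = (n : ℝ) := by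
      rw [← Nat.cast_sum, VcN_row_total hπ hn]
    have h3 : netflow n m (fun _ => (1 : ℕ)) (fun _ => (0 : ℕ)) (none : Vtx n m)
        = -(n : ℝ) := by
      show -∑ _i : Fin n, (((1 : ℕ) : ℝ) - ((0 : ℕ) : ℝ)) = -(n : ℝ)
      simp
    rw [h1, h2, h3]
    ring

lemma flowOf_unsplit {π : ℕ → ℕ → ℕ} (hπ : π ∈ PPset n m) :
    UnsplitOut (flowOf n m π) := by
  have helim : ∀ (i : Fin n) (j : Fin (m + 1)) (v : Vtx n m),
      0 < flowOf n m π (some (i, j)) v →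
      (0 < HcN n π (i : ℕ) (j : ℕ) ∧
        ∃ (a : Fin n) (b : Fin (m + 1)),
          (a : ℕ) = (i : ℕ) ∧ (b : ℕ) = (j : ℕ) + 1 ∧ v = some (a, b)) ∨
      (0 < VcN n π (i : ℕ) (j : ℕ) ∧
        ((∃ (a : Fin n) (b : Fin (m + 1)),
          (a : ℕ) = (i : ℕ) + 1 ∧ (b : ℕ) = (j : ℕ) ∧ v = some (a, b)) ∨
          ((i : ℕ) = n - 1 ∧ v = none))) := by
    intro i j v hv
    match v with
    | none =>
      rw [flowOf_eval_sn] at hv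
      split_ifs at hv with hcond
      · right
        refine ⟨?_, Or.inr ⟨hcond, rfl⟩⟩
        exact_mod_cast hv
      · exact absurd hv (lt_irrefl 0)
    | some (a, b) =>
      rw [flowOf_eval_ss] at hv
      by_cases c1 : (a : ℕ) = (i : ℕ) ∧ (b : ℕ) = (j : ℕ) + 1
      · rw [if_pos c1, if_neg (by omega), add_zero] at hv
        exact Or.inl ⟨by exact_mod_cast hv, a, b, c1.1, c1.2, rfl⟩
      · by_cases c2 : (a : ℕ) = (i : ℕ) + 1 ∧ (b : ℕ) = (j : ℕ)
        · rw [if_neg c1, if_pos c2, zero_add] at hv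
          exact Or.inr ⟨by exact_mod_cast hv, Or.inl ⟨a, b, c2.1, c2.2, rfl⟩⟩
        · rw [if_neg c1, if_neg c2, add_zero] at hv
          exact absurd hv (lt_irrefl 0)
  have hHV : ∀ (i : Fin n) (j : Fin (m + 1)),
      0 < HcN n π (i : ℕ) (j : ℕ) → 0 < VcN n π (i : ℕ) (j : ℕ) → False := by
    intro i j hH hV
    obtain ⟨k', _, hk'2, hk'3, hk'4⟩ := HcN_pos hH
    obtain ⟨k, _, hk2, hk3⟩ := VcN_pos hV
    exact nocross hπ i.isLt hk2 hk'2 hk'3 hk'4 hk3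
  intro u v w hv hw
  match u with
  | none =>
    rw [flowOf_eval_n] at hv
    exact absurd hv (lt_irrefl 0)
  | some (i, j) =>
    rcases helim i j v hv with ⟨hH1, a1, b1, ha1, hb1, hv1⟩ | ⟨hV1, hrest1⟩ <;>
      rcases helim i j w hw with ⟨hH2, a2, b2, ha2, hb2, hw2⟩ | ⟨hV2, hrest2⟩
    · rw [hv1, hw2]
      have : a1 = a2 := Fin.ext (by omega)
      have hb : b1 = b2 := Fin.ext (by omega)
      rw [this, hb]
    · exact absurd hV2 (fun h => hHV i j hH1 h)
    · exact absurd hH2 (fun h => hHV i j h hV1)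
    · rcases hrest1 with ⟨a1, b1, ha1, hb1, hv1⟩ | ⟨hi1, hv1⟩ <;>
        rcases hrest2 with ⟨a2, b2, ha2, hb2, hw2⟩ | ⟨hi2, hw2⟩
      · rw [hv1, hw2]
        have : a1 = a2 := Fin.ext (by omega)
        have hb : b1 = b2 := Fin.ext (by omega)
        rw [this, hb]
      · exfalso
        have := a1.isLt
        omega
      · exfalso
        have := a2.isLt
        omega
      · rw [hv1, hw2]

/-! ### Conservation consequences for a general flow, and stream positivity -/

lemma cons_of_mem {f : Vtx n m → Vtx n m → ℝ}
    (hf : f ∈ FlowPolytope n m (fun _ => 1) (fun _ => 0)) {i c : ℕ}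
    (hi : i < n) (hc : c ≤ m) :
    Hval n m f i c + Vval n m f i c
      = (if c = 0 then 1 else 0) + (if 0 < c then Hval n m f i (c - 1) else 0)
        + (if 0 < i then Vval n m f (i - 1) c else 0) := by
  obtain ⟨hf0, hfnn, hfc⟩ := hf
  have h := hfc (some (⟨i, hi⟩, ⟨c, by omega⟩))
  rw [sum_out f hf0, sum_in f hf0, netflow_grid_eq] at h
  dsimp only at h
  linarith

lemma run_aux {f : Vtx n m → Vtx n m → ℝ}
    (hf : f ∈ FlowPolytope n m (fun _ => 1) (fun _ => 0)) :
    ∀ t i c, i < n → c ≤ m → exC n m f i c ≤ c + t →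
      0 < Hval n m f i c + Vval n m f i c → 0 < Vval n m f i (exC n m f i c) := by
  have hfnn := hf.2.1
  intro t
  induction t with
  | zero =>
    intro i c hi hc hex hpos
    have hex0 : exC n m f i c = c := le_antisymm (by omega) (exC_ge f i c)
    have hH : ¬ 0 < Hval n m f i c := by
      have := exC_not f i c
      rw [hex0] at this
      exact this
    have hH0 : Hval n m f i c = 0 := le_antisymm (not_lt.mp hH) (Hval_nonneg hfnn i c)
    rw [hex0]
    linarith
  | succ t IH =>
    intro i c hi hc hex hpos
    by_cases hH : 0 < Hval n m f i c
    · have hcm : c < m := by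
        by_contra hcon
        have hceq : c = m := by omega
        rw [hceq, Hval_m] at hH
        exact lt_irrefl 0 hH
      have hlt : c < exC n m f i c := by
        rcases eq_or_lt_of_le (exC_ge f i c) with heq | h
        · exact absurd (heq ▸ hH) (exC_not f i c)
        · exact h
      have hcongr : exC n m f i (c + 1) = exC n m f i c := exC_congr (by omega) (by omega)
      have hpos' : 0 < Hval n m f i (c + 1) + Vval n m f i (c + 1) := by
        have hcons := cons_of_mem hf hi (show c + 1 ≤ m by omega) (c := c + 1)
        rw [if_neg (by omega), if_pos (by omega),
          show c + 1 - 1 = c from rfl] at hcons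
        have hnn : (0:ℝ) ≤ (if 0 < i then Vval n m f (i - 1) (c + 1) else 0) := by
          split_ifs
          · exact Vval_nonneg hfnn _ _
          · exact le_rfl
        linarith
      have := IH i (c + 1) hi (by omega) (by rw [hcongr]; omega) hpos'
      rw [hcongr] at this
      exact this
    · have hex0 : exC n m f i c = c := exC_eq_self hH
      have hH0 : Hval n m f i c = 0 := le_antisymm (not_lt.mp hH) (Hval_nonneg hfnn i c)
      rw [hex0]
      linarith

lemma streampos {f : Vtx n m → Vtx n m → ℝ}
    (hf : f ∈ FlowPolytope n m (fun _ => 1) (fun _ => 0)) :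
    ∀ k i, k ≤ i → i < n → 0 < Vval n m f i (Dcol n m f k i) := by
  have hfnn := hf.2.1
  intro k i hki
  induction i, hki using Nat.le_induction with
  | base =>
    intro hkn
    have hcons := cons_of_mem hf hkn (Nat.zero_le m) (c := 0)
    rw [if_pos rfl, if_neg (lt_irrefl 0)] at hcons
    have hnn : (0:ℝ) ≤ (if 0 < k then Vval n m f (k - 1) 0 else 0) := by
      split_ifs
      · exact Vval_nonneg hfnn _ _
      · exact le_rfl
    have hpos : 0 < Hval n m f k 0 + Vval n m f k 0 := by linarith
    have hrun := run_aux hf (exC n m f k 0) k 0 hkn (Nat.zero_le m) (by omega) hpos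
    rw [Dcol_self]
    exact hrun
  | succ i hki IH =>
    intro hi1
    have hi : i < n := by omega
    have hIH := IH hi
    have hcm : Dcol n m f k i ≤ m := Dcol_le_m f k i
    have hcons := cons_of_mem hf hi1 hcm (i := i + 1) (c := Dcol n m f k i)
    rw [if_pos (show 0 < i + 1 by omega), show i + 1 - 1 = i from rfl] at hcons
    have hnn1 : (0:ℝ) ≤ (if Dcol n m f k i = 0 then (1:ℝ) else 0) := by
      split_ifs <;> norm_num
    have hnn2 : (0:ℝ) ≤
        (if 0 < Dcol n m f k i then Hval n m f (i + 1) (Dcol n m f k i - 1) else 0) := by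
      split_ifs
      · exact Hval_nonneg hfnn _ _
      · exact le_rfl
    have hpos : 0 < Hval n m f (i + 1) (Dcol n m f k i)
        + Vval n m f (i + 1) (Dcol n m f k i) := by linarith
    have hrun := run_aux hf (exC n m f (i + 1) (Dcol n m f k i)) (i + 1) (Dcol n m f k i)
      hi1 hcm (by omega) hpos
    rw [Dcol_step hki]
    exact hrun

/-! ### Positivity transfer between `Hval`/`Vval` and `f` -/

lemma pos_of_Hval {f : Vtx n m → Vtx n m → ℝ} {i i' : Fin n} {j j' : Fin (m + 1)}
    (h1 : (i' : ℕ) = (i : ℕ)) (h2 : (j' : ℕ) = (j : ℕ) + 1)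
    (h : 0 < Hval n m f (i : ℕ) (j : ℕ)) : 0 < f (some (i, j)) (some (i', j')) := by
  have hjm : (j : ℕ) < m := by
    by_contra hcon
    have hjeq : (j : ℕ) = m := by have := j.isLt; omega
    rw [hjeq, Hval_m] at h
    exact lt_irrefl 0 h
  rw [Hval, dif_pos ⟨i.isLt, hjm⟩] at h
  simp only [Fin.eta] at h
  have hi'eq : i' = i := Fin.ext h1
  have hj'eq : j' = (⟨(j : ℕ) + 1, by omega⟩ : Fin (m + 1)) := Fin.ext h2
  rw [hi'eq, hj'eq]
  exact h

lemma pos_of_Vval_down {f : Vtx n m → Vtx n m → ℝ} {i i' : Fin n} {j j' : Fin (m + 1)}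
    (h1 : (i' : ℕ) = (i : ℕ) + 1) (h2 : (j' : ℕ) = (j : ℕ))
    (h : 0 < Vval n m f (i : ℕ) (j : ℕ)) : 0 < f (some (i, j)) (some (i', j')) := by
  have hi1 : (i : ℕ) + 1 < n := h1 ▸ i'.isLt
  rw [Vval, dif_pos ⟨hi1, j.isLt⟩] at h
  simp only [Fin.eta] at h
  have hi'eq : i' = (⟨(i : ℕ) + 1, hi1⟩ : Fin n) := Fin.ext h1
  have hj'eq : j' = j := Fin.ext h2
  rw [hi'eq, hj'eq]
  exact h

lemma pos_of_Vval_sink {f : Vtx n m → Vtx n m → ℝ} {i : Fin n} {j : Fin (m + 1)}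
    (h1 : (i : ℕ) = n - 1) (h : 0 < Vval n m f (i : ℕ) (j : ℕ)) :
    0 < f (some (i, j)) none := by
  have hin := i.isLt
  rw [Vval, dif_neg (fun hc => by omega), dif_pos ⟨by omega, j.isLt⟩] at h
  simp only [Fin.eta] at h
  exact h

/-! ### The recovered plane partition -/

/-- The plane partition recovered from a flow. -/
noncomputable def recovPP (n m : ℕ) (f : Vtx n m → Vtx n m → ℝ) : ℕ → ℕ → ℕ := fun i j =>
  if 1 ≤ i ∧ i ≤ n ∧ 1 ≤ j ∧ i + j ≤ n + 1 then Dcol n m f (j - 1) (n - i) else 0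

lemma recovPP_eval (f : Vtx n m → Vtx n m → ℝ) (i j : ℕ) :
    recovPP n m f i j
      = if 1 ≤ i ∧ i ≤ n ∧ 1 ≤ j ∧ i + j ≤ n + 1 then Dcol n m f (j - 1) (n - i) else 0 := rfl

lemma recovPP_mem (f : Vtx n m → Vtx n m → ℝ) : recovPP n m f ∈ PPset n m := by
  have hSkew : IsSkewPP n m (fun a => n + 1 - a) (fun _ => 0) (recovPP n m f) := by
    refine ⟨?_, ?_, ?_, ?_⟩
    · intro i j hc
      rw [recovPP_eval, if_neg (fun h => hc ((cell_iff i j).mpr h))]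
    · intro i j hc
      rw [recovPP_eval, if_pos ((cell_iff i j).mp hc)]
      exact Dcol_le_m f _ _
    · intro i j hc1 hc2
      have h1 := (cell_iff i j).mp hc1
      have h2 := (cell_iff i (j + 1)).mp hc2
      rw [recovPP_eval, recovPP_eval, if_pos h1, if_pos h2,
        show j + 1 - 1 = j from rfl]
      exact Dcol_anti (show j - 1 ≤ j by omega) (by omega)
    · intro i j hc1 hc2
      have h1 := (cell_iff i j).mp hc1
      have h2 := (cell_iff (i + 1) j).mp hc2
      rw [recovPP_eval, recovPP_eval, if_pos h1, if_pos h2]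
      have hmono := Dcol_mono (f := f) (k := j - 1) (i := n - (i + 1)) (by omega)
      rw [show n - (i + 1) + 1 = n - i from by omega] at hmono
      exact hmono
  have hc1 : ∀ j, 1 ≤ j → j ≤ n - 1 → ∀ i, 1 ≤ i → i ≤ n - j →
      (recovPP n m f i (j + 1) < recovPP n m f (i + 1) j ∨
        recovPP n m f i (j + 1) = recovPP n m f i j) := by
    intro j hj1 hj2 i hi1 hi2
    rw [recovPP_eval f i (j + 1), recovPP_eval f (i + 1) j, recovPP_eval f i j,
      if_pos (by omega), if_pos (by omega), if_pos (by omega),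
      show j + 1 - 1 = j from rfl]
    have hmerge := Dcol_merge (f := f) (k := j - 1) (r := n - i) (by omega)
    rw [show j - 1 + 1 = j from by omega,
      show n - i - 1 = n - (i + 1) from by omega] at hmerge
    exact hmerge
  exact ⟨hSkew, hc1, cond2_of_cond1 hSkew hc1⟩

lemma Dcol_flowOf_eq {π : ℕ → ℕ → ℕ} (hπ : π ∈ PPset n m) :
    ∀ k i, k ≤ i → i < n → Dcol n m (flowOf n m π) k i = xv n π i k := by
  have hkey : ∀ i k, k ≤ i → i < n →
      exC n m (flowOf n m π) i (ev n π i k) = xv n π i k := by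
    intro i k hki hi
    apply le_antisymm
    · apply exC_le_of (ev_le_xv hπ hki hi)
      by_cases hxm : xv n π i k < m
      · rw [Hval_flowOf π hi hxm]
        have hzero : HcN n π i (xv n π i k) = 0 := by
          by_contra hcon
          obtain ⟨k', _, hk'i, he', hx'⟩ := HcN_pos (Nat.pos_of_ne_zero hcon)
          exact nocross hπ hi hki hk'i he' hx' rfl
        rw [hzero]
        norm_num
      · have hxm' : xv n π i k = m := by have := xv_le hπ i k; omega
        rw [hxm', Hval_m]
        exact lt_irrefl 0
    · by_contra hcon
      push_neg at hcon
      have hge := exC_ge (flowOf n m π) i (ev n π i k)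
      have hHpos : 0 < Hval n m (flowOf n m π) i
          (exC n m (flowOf n m π) i (ev n π i k)) := by
        rw [Hval_flowOf π hi (by have := xv_le hπ i k; omega)]
        have hp : 0 < HcN n π i (exC n m (flowOf n m π) i (ev n π i k)) :=
          HcN_has (show k < n by omega) ⟨hki, hge, hcon⟩
        exact_mod_cast hp
      exact exC_not (flowOf n m π) i (ev n π i k) hHpos
  intro k i hki
  induction i, hki using Nat.le_induction with
  | base =>
    intro hkn
    rw [Dcol_self]
    have h := hkey k k le_rfl hkn
    rw [show ev n π k k = 0 from by rw [ev, if_neg (lt_irrefl k)]] at h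
    exact h
  | succ i hki IH =>
    intro hi
    have hIH := IH (by omega)
    rw [Dcol_step hki, hIH]
    have h := hkey (i + 1) k (by omega) hi
    rw [show ev n π (i + 1) k = xv n π i k from by
      rw [ev, if_pos (by omega), show i + 1 - 1 = i from rfl]] at h
    exact h

lemma recov_flowOf {π : ℕ → ℕ → ℕ} (hπ : π ∈ PPset n m) :
    recovPP n m (flowOf n m π) = π := by
  funext i j
  rw [recovPP_eval]
  by_cases hcell : 1 ≤ i ∧ i ≤ n ∧ 1 ≤ j ∧ i + j ≤ n + 1
  · rw [if_pos hcell]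
    have hD := Dcol_flowOf_eq hπ (j - 1) (n - i) (by omega) (by omega)
    rw [hD, xv, show n - (n - i) = i from by omega, show j - 1 + 1 = j from by omega]
  · rw [if_neg hcell]
    exact (hπ.1.1 i j (fun hc => hcell ((cell_iff i j).mp hc))).symm

lemma flowOf_recov_supp {f : Vtx n m → Vtx n m → ℝ}
    (hf : f ∈ FlowPolytope n m (fun _ => 1) (fun _ => 0)) :
    ∀ u v, flowOf n m (recovPP n m f) u v ≠ 0 → 0 < f u v := by
  have hxv : ∀ i k, k ≤ i → i < n → xv n (recovPP n m f) i k = Dcol n m f k i := by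
    intro i k hki hi
    rw [xv, recovPP_eval, if_pos (by omega), show k + 1 - 1 = k from rfl,
      show n - (n - i) = i from by omega]
  intro u v hne
  match u, v with
  | none, v => rw [flowOf_eval_n] at hne; exact absurd rfl hne
  | some (i, j), some (i', j') =>
    rw [flowOf_eval_ss] at hne
    by_cases c1 : (i' : ℕ) = (i : ℕ) ∧ (j' : ℕ) = (j : ℕ) + 1
    · rw [if_pos c1, if_neg (by omega), add_zero] at hne
      have hpos : 0 < HcN n (recovPP n m f) (i : ℕ) (j : ℕ) := by
        rcases Nat.eq_zero_or_pos (HcN n (recovPP n m f) (i : ℕ) (j : ℕ)) with h | h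
        · rw [h] at hne; norm_num at hne
        · exact h
      obtain ⟨k, hkn, hki, hek, hxk⟩ := HcN_pos hpos
      have hx := hxv (i : ℕ) k hki i.isLt
      have hEcase : exC n m f (i : ℕ) (ev n (recovPP n m f) (i : ℕ) k)
          = Dcol n m f k (i : ℕ) := by
        rcases Nat.lt_or_ge k (i : ℕ) with hlt | hge
        · have hev : ev n (recovPP n m f) (i : ℕ) k = Dcol n m f k ((i : ℕ) - 1) := by
            rw [ev, if_pos hlt, hxv ((i : ℕ) - 1) k (by omega) (by omega)]
          rw [hev]
          have hstep := Dcol_step (f := f) (k := k) (i := (i : ℕ) - 1) (by omega)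
          rw [show (i : ℕ) - 1 + 1 = (i : ℕ) from by omega] at hstep
          exact hstep.symm
        · have hkeq : k = (i : ℕ) := by omega
          have hev : ev n (recovPP n m f) (i : ℕ) k = 0 := by
            rw [ev, if_neg (by omega)]
          rw [hev, hkeq, Dcol_self]
      have hHpos : 0 < Hval n m f (i : ℕ) (j : ℕ) :=
        exC_min hek (by rw [hEcase, ← hx]; exact hxk)
      exact pos_of_Hval c1.1 c1.2 hHpos
    · by_cases c2 : (i' : ℕ) = (i : ℕ) + 1 ∧ (j' : ℕ) = (j : ℕ)
      · rw [if_neg c1, if_pos c2, zero_add] at hne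
        have hpos : 0 < VcN n (recovPP n m f) (i : ℕ) (j : ℕ) := by
          rcases Nat.eq_zero_or_pos (VcN n (recovPP n m f) (i : ℕ) (j : ℕ)) with h | h
          · rw [h] at hne; norm_num at hne
          · exact h
        obtain ⟨k, hkn, hki, hxk⟩ := VcN_pos hpos
        rw [hxv (i : ℕ) k hki i.isLt] at hxk
        have hV := streampos hf k (i : ℕ) hki i.isLt
        exact pos_of_Vval_down c2.1 c2.2 (by rwa [hxk] at hV)
      · rw [if_neg c1, if_neg c2, add_zero] at hne
        exact absurd rfl hne
  | some (i, j), none =>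
    rw [flowOf_eval_sn] at hne
    split_ifs at hne with hcond
    · have hpos : 0 < VcN n (recovPP n m f) (i : ℕ) (j : ℕ) := by
        rcases Nat.eq_zero_or_pos (VcN n (recovPP n m f) (i : ℕ) (j : ℕ)) with h | h
        · rw [h] at hne; norm_num at hne
        · exact h
      obtain ⟨k, hkn, hki, hxk⟩ := VcN_pos hpos
      rw [hxv (i : ℕ) k hki i.isLt] at hxk
      have hV := streampos hf k (i : ℕ) hki i.isLt
      exact pos_of_Vval_sink hcond (by rwa [hxk] at hV)
    · exact absurd rfl hne

lemma flowOf_recov_eq (hn : 0 < n) {f : Vtx n m → Vtx n m → ℝ}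
    (hf : f ∈ FlowPolytope n m (fun _ => 1) (fun _ => 0)) (hU : UnsplitOut f) :
    flowOf n m (recovPP n m f) = f :=
  flow_determined hf (flowOf_mem hn (recovPP_mem f)) hU
    (fun u v h0 => by
      by_contra hne
      have hlt := flowOf_recov_supp hf u v hne
      rw [h0] at hlt
      exact lt_irrefl 0 hlt)

lemma statement7_bij (hn : 0 < n) :
    Set.BijOn (recovPP n m)
      {f | IsExtremePt (FlowPolytope n m (fun _ => 1) (fun _ => 0)) f} (PPset n m) := by
  refine ⟨fun f _ => recovPP_mem f, ?_, ?_⟩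
  · intro f hf g hg heq
    have h1 := flowOf_recov_eq hn hf.1 (unsplit_of_extreme hf)
    have h2 := flowOf_recov_eq hn hg.1 (unsplit_of_extreme hg)
    rw [← h1, ← h2, heq]
  · intro π hπ
    exact ⟨flowOf n m π,
      extreme_of_unsplit (flowOf_mem hn hπ) (flowOf_unsplit hπ), recov_flowOf hπ⟩

end Statement7Proof

/-- The number of extreme points of `F_{G(n,m)}(1,0)` equals the
number of plane partitions of the staircase `δ_n` with entries at most `m`
satisfying the two local conditions of Corollary 4.9. -/
theorem statement7 (n m : ℕ) (hn : 0 < n) (hm : 0 < m) :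
    numVertices n m (fun _ => 1) (fun _ => 0) =
      Set.ncard { π : ℕ → ℕ → ℕ |
        IsSkewPP n m (fun i => n + 1 - i) (fun _ => 0) π ∧
        (∀ j, 1 ≤ j → j ≤ n - 1 → ∀ i, 1 ≤ i → i ≤ n - j →
          (π i (j + 1) < π (i + 1) j ∨ π i (j + 1) = π i j)) ∧
        (∀ j, 1 ≤ j → j ≤ n - 1 → ∀ i, 2 ≤ i → i ≤ n - j →
          (π i j = π i (j + 1) → π (i - 1) j = π (i - 1) (j + 1))) } := by
  have hbij := statement7_bij (n := n) (m := m) hn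
  have h1 : (recovPP n m) ''
      {f | IsExtremePt (FlowPolytope n m (fun _ => 1) (fun _ => 0)) f} = PPset n m :=
    hbij.image_eq
  have h2 := Set.ncard_image_of_injOn hbij.injOn
  show Set.ncard {f | IsExtremePt (FlowPolytope n m (fun _ => 1) (fun _ => 0)) f} = _
  rw [← h2, h1]
  rfl

end GPS
end

section
/- Let n be a positive integer and a ∈ ℕ^n. (1) For every j ∈ {0,1}^n with χ(a) ⊵_1 j, there exists exactly one vector b ∈ ℕ^n with χ(b) = j such that F_{H_⊤(n)}(a,b) contains an unsplittable flow, and for this b the unsplittable flow in F_{H_⊤(n)}(a,b) is unique. (2) Conversely, if b ∈ ℕ^n is such that F_{H_⊤(n)}(a,b) contains an unsplittable flow, then χ(a) ⊵_1 χ(b) and b is the unique vector from (1) associated to j = χ(b). -/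
open scoped BigOperators Classical

namespace GPS

lemma psum_zero {n : ℕ} (a : Fin n → ℕ) : psum a 0 = 0 := by
  simp [psum]

lemma psum_succ' {n : ℕ} (a : Fin n → ℕ) (m : ℕ) :
    psum a (m + 1) = psum a m + (if h : m < n then a ⟨m, h⟩ else 0) := by
  unfold psum
  split
  · rename_i h
    rw [show a ⟨m, h⟩ = ∑ k : Fin n, if k = ⟨m, h⟩ then a k else 0 by simp,
      ← Finset.sum_add_distrib]
    apply Finset.sum_congr rfl
    intro k _
    by_cases hk : k = (⟨m, h⟩ : Fin n)
    · subst hk; simp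
    · have hkv : (k : ℕ) ≠ m := fun hh => hk (Fin.ext hh)
      have : ((k : ℕ) < m + 1) ↔ ((k : ℕ) < m) := by omega
      simp [this, hk]
  · rename_i h
    rw [add_zero]
    apply Finset.sum_congr rfl
    intro k _
    have := k.isLt
    have : (k : ℕ) < m + 1 ↔ (k : ℕ) < m := by omega
    simp [this]

lemma psum_succ {n : ℕ} (a : Fin n → ℕ) (i : Fin n) :
    psum a ((i : ℕ) + 1) = psum a (i : ℕ) + a i := by
  rw [psum_succ', dif_pos i.isLt]

lemma psum_mono {n : ℕ} (a : Fin n → ℕ) {m m' : ℕ} (h : m ≤ m') :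
    psum a m ≤ psum a m' := by
  unfold psum
  apply Finset.sum_le_sum
  intro k _
  split <;> rename_i h1
  · rw [if_pos (lt_of_lt_of_le h1 h)]
  · positivity

lemma psum_ge {n : ℕ} (a : Fin n → ℕ) {m : ℕ} (h : n ≤ m) :
    psum a m = ∑ k, a k := by
  apply Finset.sum_congr rfl
  intro k _
  rw [if_pos (lt_of_lt_of_le k.isLt h)]

lemma psum_eq_of_zero_between {n : ℕ} (a : Fin n → ℕ) {m1 m2 : ℕ} (h : m1 ≤ m2)
    (hz : ∀ k : Fin n, m1 ≤ (k : ℕ) → (k : ℕ) < m2 → a k = 0) :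
    psum a m2 = psum a m1 := by
  apply Finset.sum_congr rfl
  intro k _
  by_cases h1 : (k : ℕ) < m1
  · rw [if_pos h1, if_pos (lt_of_lt_of_le h1 h)]
  · rw [if_neg h1]
    by_cases h2 : (k : ℕ) < m2
    · rw [if_pos h2, hz k (by omega) h2]
    · rw [if_neg h2]

lemma le_psum {n : ℕ} (a : Fin n → ℕ) {m : ℕ} {k : Fin n} (h : (k : ℕ) < m) :
    a k ≤ psum a m := by
  have := Finset.single_le_sum (f := fun k : Fin n => if (k : ℕ) < m then a k else 0)
    (fun i _ => by positivity) (Finset.mem_univ k)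
  rwa [if_pos h] at this

lemma chi_chi {n : ℕ} (u : Fin n → ℕ) : chi (chi u) = chi u := by
  funext i
  unfold chi
  by_cases h : u i = 0 <;> simp [h]

lemma chi_eq_zero_iff {n : ℕ} (u : Fin n → ℕ) (i : Fin n) : chi u i = 0 ↔ u i = 0 := by
  unfold chi
  by_cases h : u i = 0 <;> simp [h]

lemma psum_chi_card {n : ℕ} (u : Fin n → ℕ) (m : ℕ) :
    psum (chi u) m = (Finset.univ.filter fun k : Fin n => (k : ℕ) < m ∧ u k ≠ 0).card := by
  rw [Finset.card_filter]
  apply Finset.sum_congr rfl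
  intro k _
  unfold chi
  by_cases h1 : (k : ℕ) < m <;> by_cases h2 : u k = 0 <;> simp [h1, h2]


/-! ### Auxiliary infrastructure for `H_⊤(n)` -/

def vA {n : ℕ} (i : Fin n) : HVtx n := some (i, 0)
def vB {n : ℕ} (i : Fin n) : HVtx n := some (i, 1)
def vC {n : ℕ} (i : Fin n) : HVtx n := some (i, 2)

def hnext {n : ℕ} (i : Fin n) : HVtx n :=
  if h : (i : ℕ) + 1 < n then vB ⟨(i : ℕ) + 1, h⟩ else none

lemma vA_inj {n : ℕ} {i i' : Fin n} (h : vA i = vA i') : i = i' := by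
  simpa [vA] using h

lemma vB_inj {n : ℕ} {i i' : Fin n} (h : vB i = vB i') : i = i' := by
  simpa [vB] using h

lemma vA_ne_vB {n : ℕ} (i i' : Fin n) : vA i ≠ vB i' := by
  simp [vA, vB, Fin.ext_iff]

lemma vA_ne_vC {n : ℕ} (i i' : Fin n) : vA i ≠ vC i' := by
  simp [vA, vC, Fin.ext_iff]

lemma vB_ne_vC {n : ℕ} (i i' : Fin n) : vB i ≠ vC i' := by
  simp [vB, vC, Fin.ext_iff]

lemma vC_ne_hnext {n : ℕ} (i i' : Fin n) : vC i ≠ hnext i' := by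
  unfold hnext
  split
  · simp [vB, vC, Fin.ext_iff]
  · simp [vC]

lemma vA_ne_hnext {n : ℕ} (i i' : Fin n) : vA i ≠ hnext i' := by
  unfold hnext
  split
  · simp [vA, vB, Fin.ext_iff]
  · simp [vA]

lemma edge_cases {n : ℕ} {u v : HVtx n} (h : HIsEdge n u v) :
    (∃ i, u = vA i ∧ v = vB i) ∨ (∃ i, u = vB i ∧ v = vC i) ∨
    (∃ i, u = vB i ∧ v = hnext i) := by
  match u, v with
  | none, v => exact absurd h (by simp [HIsEdge])
  | some (i, j), none =>
    obtain ⟨hj, hi⟩ := h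
    right; right
    refine ⟨i, ?_, ?_⟩
    · unfold vB; congr 2; exact Fin.ext hj
    · unfold hnext
      rw [dif_neg]
      have := i.isLt
      omega
  | some (i, j), some (i', j') =>
    rcases h with ⟨hi, hj⟩ | ⟨hj, hj', hi⟩
    · subst hi
      have h3 := j'.isLt
      have : (j : ℕ) = 0 ∨ (j : ℕ) = 1 := by omega
      rcases this with h0 | h1
      · left
        exact ⟨i, by unfold vA; congr 2; exact Fin.ext h0,
          by unfold vB; congr 2; exact Fin.ext (by omega)⟩
      · right; left
        exact ⟨i, by unfold vB; congr 2; exact Fin.ext h1,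
          by unfold vC; congr 2; exact Fin.ext (by omega)⟩
    · right; right
      refine ⟨i, by unfold vB; congr 2; exact Fin.ext hj, ?_⟩
      unfold hnext
      have hlt : (i : ℕ) + 1 < n := by rw [← hi]; exact i'.isLt
      rw [dif_pos hlt]
      unfold vB
      congr 2
      · exact Fin.ext (by simp [← hi])
      · exact Fin.ext hj'

lemma out_A {n : ℕ} {i : Fin n} {v : HVtx n} (h : HIsEdge n (vA i) v) : v = vB i := by
  rcases edge_cases h with ⟨i', h1, h2⟩ | ⟨i', h1, h2⟩ | ⟨i', h1, h2⟩
  · rw [vA_inj h1]; exact h2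
  · exact absurd h1 (vA_ne_vB i i')
  · exact absurd h1 (vA_ne_vB i i')

lemma out_B {n : ℕ} {i : Fin n} {v : HVtx n} (h : HIsEdge n (vB i) v) :
    v = vC i ∨ v = hnext i := by
  rcases edge_cases h with ⟨i', h1, h2⟩ | ⟨i', h1, h2⟩ | ⟨i', h1, h2⟩
  · exact absurd h1.symm (vA_ne_vB i' i)
  · rw [← vB_inj h1] at h2; exact Or.inl h2
  · rw [← vB_inj h1] at h2; exact Or.inr h2

lemma out_C {n : ℕ} {i : Fin n} {v : HVtx n} (h : HIsEdge n (vC i) v) : False := by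
  rcases edge_cases h with ⟨i', h1, _⟩ | ⟨i', h1, _⟩ | ⟨i', h1, _⟩
  · exact (vA_ne_vC i' i) h1.symm
  · exact (vB_ne_vC i' i) h1.symm
  · exact (vB_ne_vC i' i) h1.symm

lemma out_none {n : ℕ} {v : HVtx n} (h : HIsEdge n none v) : False := h

lemma into_A {n : ℕ} {i : Fin n} {u : HVtx n} (h : HIsEdge n u (vA i)) : False := by
  rcases edge_cases h with ⟨i', _, h2⟩ | ⟨i', _, h2⟩ | ⟨i', _, h2⟩
  · exact (vA_ne_vB i i') h2
  · exact (vA_ne_vC i i') h2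
  · exact (vA_ne_hnext i i') h2

lemma into_B {n : ℕ} {i : Fin n} {u : HVtx n} (h : HIsEdge n u (vB i)) :
    u = vA i ∨ ∃ i' : Fin n, (i' : ℕ) + 1 = (i : ℕ) ∧ u = vB i' := by
  rcases edge_cases h with ⟨i', h1, h2⟩ | ⟨i', h1, h2⟩ | ⟨i', h1, h2⟩
  · rw [← vB_inj h2] at h1; exact Or.inl h1
  · exact absurd h2 (vB_ne_vC i i')
  · unfold hnext at h2
    split at h2
    · right
      refine ⟨i', ?_, h1⟩
      have := vB_inj h2
      rw [this]
    · exact absurd h2 (by simp [vB])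

lemma into_C {n : ℕ} {i : Fin n} {u : HVtx n} (h : HIsEdge n u (vC i)) : u = vB i := by
  rcases edge_cases h with ⟨i', h1, h2⟩ | ⟨i', h1, h2⟩ | ⟨i', h1, h2⟩
  · exact absurd h2 (by simp [vB, vC, Fin.ext_iff])
  · rw [show i' = i from by simpa [vC, Fin.ext_iff] using h2.symm] at h1; exact h1
  · exact absurd h2 (vC_ne_hnext i i')

lemma into_none {n : ℕ} {u : HVtx n} (h : HIsEdge n u (none : HVtx n)) :
    ∃ i : Fin n, (i : ℕ) + 1 = n ∧ u = vB i := by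
  rcases edge_cases h with ⟨i', h1, h2⟩ | ⟨i', h1, h2⟩ | ⟨i', h1, h2⟩
  · exact absurd h2.symm (by simp [vB])
  · exact absurd h2.symm (by simp [vC])
  · unfold hnext at h2
    split at h2
    · exact absurd h2.symm (by simp [vB])
    · rename_i hlt
      have := i'.isLt
      exact ⟨i', by omega, h1⟩

section Sums

variable {n : ℕ} (f : HVtx n → HVtx n → ℝ)
  (hs : ∀ u v, ¬ HIsEdge n u v → f u v = 0)

include hs

lemma sum_out_A (i : Fin n) : ∑ v, f (vA i) v = f (vA i) (vB i) := by
  apply Finset.sum_eq_single_of_mem _ (Finset.mem_univ _)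
  intro v _ hv
  exact hs _ _ fun he => hv (out_A he)

lemma sum_out_B (i : Fin n) : ∑ v, f (vB i) v = f (vB i) (vC i) + f (vB i) (hnext i) := by
  rw [← Finset.sum_pair (vC_ne_hnext i i)]
  apply (Finset.sum_subset (Finset.subset_univ _) _).symm
  intro v _ hv
  simp only [Finset.mem_insert, Finset.mem_singleton] at hv
  push_neg at hv
  refine hs _ _ fun he => ?_
  rcases out_B he with h | h
  · exact hv.1 h
  · exact hv.2 h

lemma sum_out_C (i : Fin n) : ∑ v, f (vC i) v = 0 := by
  apply Finset.sum_eq_zero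
  intro v _
  exact hs _ _ fun he => out_C he

lemma sum_out_none_s10 : ∑ v, f none v = 0 := by
  apply Finset.sum_eq_zero
  intro v _
  exact hs _ _ fun he => out_none he

lemma sum_in_A (i : Fin n) : ∑ v, f v (vA i) = 0 := by
  apply Finset.sum_eq_zero
  intro v _
  exact hs _ _ fun he => into_A he

lemma sum_in_B_zero (i : Fin n) (hi : (i : ℕ) = 0) :
    ∑ v, f v (vB i) = f (vA i) (vB i) := by
  apply Finset.sum_eq_single_of_mem _ (Finset.mem_univ _)
  intro v _ hv
  refine hs _ _ fun he => hv ?_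
  rcases into_B he with h | ⟨i', hi', h⟩
  · exact h
  · omega

lemma sum_in_B_succ (i i' : Fin n) (hii' : (i' : ℕ) + 1 = (i : ℕ)) :
    ∑ v, f v (vB i) = f (vA i) (vB i) + f (vB i') (vB i) := by
  have hne : vA i ≠ vB i' := vA_ne_vB i i'
  rw [show f (vA i) (vB i) + f (vB i') (vB i) = ∑ u ∈ {vA i, vB i'}, f u (vB i) from
    (Finset.sum_pair (f := fun u => f u (vB i)) hne).symm]
  apply (Finset.sum_subset (Finset.subset_univ _) _).symm
  intro u _ hu
  simp only [Finset.mem_insert, Finset.mem_singleton] at hu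
  push_neg at hu
  refine hs _ _ fun he => ?_
  rcases into_B he with h | ⟨i'', hi'', h⟩
  · exact hu.1 h
  · have : i'' = i' := Fin.ext (by omega)
    exact hu.2 (this ▸ h)

lemma sum_in_C (i : Fin n) : ∑ v, f v (vC i) = f (vB i) (vC i) := by
  apply Finset.sum_eq_single_of_mem _ (Finset.mem_univ _)
  intro v _ hv
  exact hs _ _ fun he => hv (into_C he)

lemma sum_in_none_s10 (hn : 0 < n) :
    ∑ v, f v none = f (vB ⟨n - 1, by omega⟩) none := by
  apply Finset.sum_eq_single_of_mem _ (Finset.mem_univ _)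
  intro v _ hv
  refine hs _ _ fun he => hv ?_
  obtain ⟨i, hi, h⟩ := into_none he
  have : i = ⟨n - 1, by omega⟩ := Fin.ext (by simp; omega)
  exact this ▸ h

end Sums

lemma Hnetflow_A {n : ℕ} (a b : Fin n → ℕ) (i : Fin n) :
    Hnetflow n a b (vA i) = a i := by
  show (if ((0 : Fin 3) : ℕ) = 0 then (a i : ℝ) else 0)
      - (if ((0 : Fin 3) : ℕ) = 2 then (b i : ℝ) else 0) = a i
  norm_num

lemma Hnetflow_B {n : ℕ} (a b : Fin n → ℕ) (i : Fin n) :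
    Hnetflow n a b (vB i) = 0 := by
  show (if ((1 : Fin 3) : ℕ) = 0 then (a i : ℝ) else 0)
      - (if ((1 : Fin 3) : ℕ) = 2 then (b i : ℝ) else 0) = 0
  norm_num

lemma Hnetflow_C {n : ℕ} (a b : Fin n → ℕ) (i : Fin n) :
    Hnetflow n a b (vC i) = -(b i) := by
  show (if ((2 : Fin 3) : ℕ) = 0 then (a i : ℝ) else 0)
      - (if ((2 : Fin 3) : ℕ) = 2 then (b i : ℝ) else 0) = -(b i)
  norm_num

/-! ### The canonical flow -/

def Good (n : ℕ) (a b : Fin n → ℕ) : Prop :=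
  Dominates a b ∧ ∀ i : Fin n, 0 < b i → psum a ((i : ℕ) + 1) = psum b ((i : ℕ) + 1)

noncomputable def hflow (n : ℕ) (a b : Fin n → ℕ) : HVtx n → HVtx n → ℝ := fun u v =>
  match u, v with
  | some (i, j), some (i', j') =>
    if i = i' ∧ (j : ℕ) = 0 ∧ (j' : ℕ) = 1 then (a i : ℝ)
    else if i = i' ∧ (j : ℕ) = 1 ∧ (j' : ℕ) = 2 then (b i : ℝ)
    else if (j : ℕ) = 1 ∧ (j' : ℕ) = 1 ∧ (i' : ℕ) = (i : ℕ) + 1 then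
      (psum a ((i : ℕ) + 1) : ℝ) - (psum b ((i : ℕ) + 1) : ℝ)
    else 0
  | some (i, j), none =>
    if (j : ℕ) = 1 ∧ (i : ℕ) + 1 = n then (psum a n : ℝ) - (psum b n : ℝ) else 0
  | none, _ => 0

lemma hflow_AB {n : ℕ} (a b : Fin n → ℕ) (i : Fin n) :
    hflow n a b (vA i) (vB i) = a i := by
  show (if i = i ∧ ((0 : Fin 3) : ℕ) = 0 ∧ ((1 : Fin 3) : ℕ) = 1 then (a i : ℝ) else _) = _
  norm_num

lemma hflow_BC {n : ℕ} (a b : Fin n → ℕ) (i : Fin n) :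
    hflow n a b (vB i) (vC i) = b i := by
  show (if i = i ∧ ((1 : Fin 3) : ℕ) = 0 ∧ ((2 : Fin 3) : ℕ) = 1 then (a i : ℝ)
    else if i = i ∧ ((1 : Fin 3) : ℕ) = 1 ∧ ((2 : Fin 3) : ℕ) = 2 then (b i : ℝ)
    else _) = _
  norm_num

lemma hflow_B_hnext {n : ℕ} (a b : Fin n → ℕ) (i : Fin n) :
    hflow n a b (vB i) (hnext i) = (psum a ((i : ℕ) + 1) : ℝ) - psum b ((i : ℕ) + 1) := by
  unfold hnext
  split
  · rename_i h
    show (if i = ⟨(i : ℕ) + 1, h⟩ ∧ ((1 : Fin 3) : ℕ) = 0 ∧ ((1 : Fin 3) : ℕ) = 1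
        then (a i : ℝ)
      else if i = ⟨(i : ℕ) + 1, h⟩ ∧ ((1 : Fin 3) : ℕ) = 1 ∧ ((1 : Fin 3) : ℕ) = 2
        then (b i : ℝ)
      else if ((1 : Fin 3) : ℕ) = 1 ∧ ((1 : Fin 3) : ℕ) = 1 ∧
          ((⟨(i : ℕ) + 1, h⟩ : Fin n) : ℕ) = (i : ℕ) + 1 then
        (psum a ((i : ℕ) + 1) : ℝ) - (psum b ((i : ℕ) + 1) : ℝ)
      else 0) = _
    norm_num
  · rename_i h
    have hin : (i : ℕ) + 1 = n := by have := i.isLt; omega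
    show (if ((1 : Fin 3) : ℕ) = 1 ∧ (i : ℕ) + 1 = n
        then (psum a n : ℝ) - (psum b n : ℝ) else 0) = _
    rw [if_pos ⟨by norm_num, hin⟩, hin]

lemma hflow_support {n : ℕ} (a b : Fin n → ℕ) :
    ∀ u v, ¬ HIsEdge n u v → hflow n a b u v = 0 := by
  intro u v h
  match u, v with
  | none, v => rfl
  | some (i, j), none =>
    show (if (j : ℕ) = 1 ∧ (i : ℕ) + 1 = n then _ else 0) = 0
    rw [if_neg]
    rintro ⟨h1, h2⟩
    exact h ⟨h1, by omega⟩
  | some (i, j), some (i', j') =>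
    show (if i = i' ∧ (j : ℕ) = 0 ∧ (j' : ℕ) = 1 then _ else
      if i = i' ∧ (j : ℕ) = 1 ∧ (j' : ℕ) = 2 then _ else
      if (j : ℕ) = 1 ∧ (j' : ℕ) = 1 ∧ (i' : ℕ) = (i : ℕ) + 1 then _ else 0) = 0
    rw [if_neg, if_neg, if_neg]
    · rintro ⟨h1, h2, h3⟩
      exact h (Or.inr ⟨h1, h2, h3⟩)
    · rintro ⟨h1, h2, h3⟩
      exact h (Or.inl ⟨h1, by omega⟩)
    · rintro ⟨h1, h2, h3⟩
      exact h (Or.inl ⟨h1, by omega⟩)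

lemma hflow_nonneg {n : ℕ} {a b : Fin n → ℕ} (hd : Dominates a b) :
    ∀ u v, 0 ≤ hflow n a b u v := by
  intro u v
  match u, v with
  | none, v => exact le_refl 0
  | some (i, j), none =>
    show (0 : ℝ) ≤ if _ ∧ _ then _ else _
    split
    · rw [sub_nonneg]
      exact Nat.cast_le.mpr (hd n)
    · exact le_refl 0
  | some (i, j), some (i', j') =>
    show (0 : ℝ) ≤ if _ ∧ _ ∧ _ then _ else if _ ∧ _ ∧ _ then _ else if _ ∧ _ ∧ _ then _ else _
    split
    · positivity
    split
    · positivity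
    split
    · rw [sub_nonneg]
      exact Nat.cast_le.mpr (hd _)
    · exact le_refl 0

lemma hflow_mem {n : ℕ} (hn : 0 < n) {a b : Fin n → ℕ} (hg : Good n a b) :
    hflow n a b ∈ FHtop n a b := by
  have hs := hflow_support a b (n := n)
  refine ⟨hs, hflow_nonneg hg.1, ?_⟩
  intro u
  match u with
  | none =>
    rw [sum_out_none_s10 _ hs, sum_in_none_s10 _ hs hn]
    set i : Fin n := ⟨n - 1, by omega⟩ with hi
    have h1 : hnext i = none := by
      unfold hnext
      rw [dif_neg (by simp [hi]; omega)]
    have h2 : (i : ℕ) + 1 = n := by simp [hi]; omega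
    have hval : hflow n a b (vB i) none = (psum a n : ℝ) - psum b n := by
      have hv := hflow_B_hnext a b i
      rw [h1, h2] at hv
      exact hv
    rw [hval]
    show _ = Hnetflow n a b none
    unfold Hnetflow
    rw [psum_ge a (le_refl n), psum_ge b (le_refl n)]
    push_cast
    rw [Finset.sum_sub_distrib]
    ring
  | some (i, j) =>
    obtain ⟨jv, hjv⟩ := j
    interval_cases jv
    · have hA : (some (i, ⟨0, by omega⟩) : HVtx n) = vA i := rfl
      rw [hA, sum_out_A _ hs, sum_in_A _ hs, Hnetflow_A, hflow_AB]
      ring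
    · have hB : (some (i, ⟨1, by omega⟩) : HVtx n) = vB i := rfl
      rw [hB, sum_out_B _ hs, Hnetflow_B, hflow_BC, hflow_B_hnext]
      have key : ∑ v, hflow n a b v (vB i) = (a i : ℝ) + ((psum a (i : ℕ) : ℝ) - psum b (i : ℕ)) := by
        rcases Nat.eq_zero_or_pos (i : ℕ) with h0 | hpos
        · rw [sum_in_B_zero _ hs i h0, hflow_AB, h0]
          rw [psum_zero, psum_zero]
          push_cast
          ring
        · set i' : Fin n := ⟨(i : ℕ) - 1, by omega⟩ with hi'
          have hii' : (i' : ℕ) + 1 = (i : ℕ) := by simp [hi']; omega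
          rw [sum_in_B_succ _ hs i i' hii', hflow_AB]
          have : vB i = hnext i' := by
            unfold hnext
            rw [dif_pos (by rw [hii']; exact i.isLt)]
            unfold vB
            congr 2
            exact Fin.ext hii'.symm
          rw [this, hflow_B_hnext, hii']
      rw [key]
      have e1 := psum_succ a i
      have e2 := psum_succ b i
      have e1' : (psum a ((i : ℕ) + 1) : ℝ) = psum a (i : ℕ) + a i := by
        rw [e1]; push_cast; ring
      have e2' : (psum b ((i : ℕ) + 1) : ℝ) = psum b (i : ℕ) + b i := by
        rw [e2]; push_cast; ring
      rw [e1', e2']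
      ring
    · have hC : (some (i, ⟨2, by omega⟩) : HVtx n) = vC i := rfl
      rw [hC, sum_out_C _ hs, sum_in_C _ hs, Hnetflow_C, hflow_BC]
      ring

lemma hflow_unsplittable {n : ℕ} {a b : Fin n → ℕ} (hg : Good n a b) :
    HUnsplittable n a b (hflow n a b) := by
  constructor
  · intro u v w hv hw
    have hev : HIsEdge n u v := by
      by_contra hne
      rw [hflow_support a b u v hne] at hv
      exact lt_irrefl 0 hv
    have hew : HIsEdge n u w := by
      by_contra hne
      rw [hflow_support a b u w hne] at hw
      exact lt_irrefl 0 hw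
    rcases edge_cases hev with ⟨i, hu, hv'⟩ | ⟨i, hu, hv'⟩ | ⟨i, hu, hv'⟩ <;>
      rcases edge_cases hew with ⟨i2, hu2, hw'⟩ | ⟨i2, hu2, hw'⟩ | ⟨i2, hu2, hw'⟩
    · rw [hv', hw', vA_inj (hu.symm.trans hu2)]
    · exact absurd (hu.symm.trans hu2) (vA_ne_vB i i2)
    · exact absurd (hu.symm.trans hu2) (vA_ne_vB i i2)
    · exact absurd (hu2.symm.trans hu) (vA_ne_vB i2 i)
    · rw [hv', hw', vB_inj (hu.symm.trans hu2)]
    · -- v = vC i (so b i > 0), w = hnext i2 with i = i2 : contradiction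
      have hii : i = i2 := vB_inj (hu.symm.trans hu2)
      subst hii
      rw [hu, hv'] at hv
      rw [hflow_BC] at hv
      have hbi : 0 < b i := by exact_mod_cast hv
      rw [hu2, hw', hflow_B_hnext, hg.2 i hbi] at hw
      simp at hw
    · exact absurd (hu2.symm.trans hu) (vA_ne_vB i2 i)
    · have hii : i = i2 := vB_inj (hu.symm.trans hu2)
      subst hii
      rw [hu2, hw', hflow_BC] at hw
      have hbi : 0 < b i := by exact_mod_cast hw
      rw [hu, hv', hflow_B_hnext, hg.2 i hbi] at hv
      simp at hv
    · rw [hv', hw', vB_inj (hu.symm.trans hu2)]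
  · intro u hu v
    match u with
    | none => rfl
    | some (i, j) =>
      have hj2 : (j : ℕ) = 2 := by
        by_contra hne
        rw [show Hnetflow n a b (some (i, j)) =
            (if (j : ℕ) = 0 then (a i : ℝ) else 0) - (if (j : ℕ) = 2 then (b i : ℝ) else 0)
          from rfl, if_neg hne] at hu
        split at hu <;> simp at hu
        · exact absurd hu (not_lt.mpr (by positivity))
      match v with
      | none =>
        show (if (j : ℕ) = 1 ∧ (i : ℕ) + 1 = n then _ else 0) = 0
        rw [if_neg]
        rintro ⟨h1, _⟩
        omega
      | some (i', j') =>
        show (if i = i' ∧ (j : ℕ) = 0 ∧ (j' : ℕ) = 1 then _ else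
          if i = i' ∧ (j : ℕ) = 1 ∧ (j' : ℕ) = 2 then _ else
          if (j : ℕ) = 1 ∧ (j' : ℕ) = 1 ∧ (i' : ℕ) = (i : ℕ) + 1 then _ else 0) = 0
        rw [if_neg, if_neg, if_neg]
        · rintro ⟨h1, _⟩; omega
        · rintro ⟨_, h1, _⟩; omega
        · rintro ⟨_, h1, _⟩; omega

section Extract

variable {n : ℕ} {a b : Fin n → ℕ} {f : HVtx n → HVtx n → ℝ}

lemma flow_AB (hf : f ∈ FHtop n a b) (i : Fin n) : f (vA i) (vB i) = a i := by
  have h := hf.2.2 (vA i)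
  rw [sum_out_A _ hf.1, sum_in_A _ hf.1, Hnetflow_A] at h
  linarith

lemma flow_BC (hf : f ∈ FHtop n a b) (i : Fin n) : f (vB i) (vC i) = b i := by
  have h := hf.2.2 (vC i)
  rw [sum_out_C _ hf.1, sum_in_C _ hf.1, Hnetflow_C] at h
  linarith

lemma flow_B_hnext (hf : f ∈ FHtop n a b) :
    ∀ m : ℕ, ∀ h : m < n,
      f (vB ⟨m, h⟩) (hnext ⟨m, h⟩) = (psum a (m + 1) : ℝ) - psum b (m + 1) := by
  intro m
  induction m with
  | zero =>
    intro h
    set i : Fin n := ⟨0, h⟩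
    have hc := hf.2.2 (vB i)
    rw [sum_out_B _ hf.1, sum_in_B_zero _ hf.1 i rfl, Hnetflow_B, flow_AB hf, flow_BC hf] at hc
    have e1 : psum a (0 + 1) = psum a 0 + a i := psum_succ a i
    have e2 : psum b (0 + 1) = psum b 0 + b i := psum_succ b i
    rw [psum_zero] at e1 e2
    rw [e1, e2]
    push_cast
    linarith
  | succ m ih =>
    intro h
    set i : Fin n := ⟨m + 1, h⟩ with hidef
    set i' : Fin n := ⟨m, by omega⟩ with hi'def
    have hii' : (i' : ℕ) + 1 = (i : ℕ) := rfl
    have hc := hf.2.2 (vB i)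
    rw [sum_out_B _ hf.1, sum_in_B_succ _ hf.1 i i' hii', Hnetflow_B,
      flow_AB hf, flow_BC hf] at hc
    have hBB : vB i = hnext i' := by
      unfold hnext
      rw [dif_pos (show (i' : ℕ) + 1 < n from h)]
    rw [show f (vB i') (vB i) = f (vB i') (hnext i') from by rw [← hBB], ih (by omega)] at hc
    have e1 : psum a (m + 1 + 1) = psum a (m + 1) + a i := psum_succ a i
    have e2 : psum b (m + 1 + 1) = psum b (m + 1) + b i := psum_succ b i
    rw [e1, e2]
    push_cast
    linarith

lemma flow_eq_hflow (hf : f ∈ FHtop n a b) : f = hflow n a b := by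
  funext u v
  by_cases he : HIsEdge n u v
  · rcases edge_cases he with ⟨i, hu, hv⟩ | ⟨i, hu, hv⟩ | ⟨i, hu, hv⟩
    · rw [hu, hv, flow_AB hf, hflow_AB]
    · rw [hu, hv, flow_BC hf, hflow_BC]
    · rw [hu, hv]
      have : i = ⟨(i : ℕ), i.isLt⟩ := Fin.ext rfl
      rw [this] at *
      rw [flow_B_hnext hf (i : ℕ) i.isLt, hflow_B_hnext]
  · rw [hf.1 u v he, hflow_support a b u v he]

lemma dominates_of_flow (hf : f ∈ FHtop n a b) : Dominates a b := by
  intro m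
  rcases le_or_gt m n with hmn | hnm
  · rcases Nat.eq_zero_or_pos m with h0 | hpos
    · rw [h0, psum_zero, psum_zero]
    · obtain ⟨k, rfl⟩ : ∃ k, m = k + 1 := ⟨m - 1, by omega⟩
      have hk : k < n := by omega
      have := hf.2.1 (vB ⟨k, hk⟩) (hnext ⟨k, hk⟩)
      rw [flow_B_hnext hf k hk] at this
      have : (psum b (k + 1) : ℝ) ≤ psum a (k + 1) := by linarith
      exact_mod_cast this
  · have hkey : psum b n ≤ psum a n := by
      rcases Nat.eq_zero_or_pos n with h0 | hn
      · subst h0; rw [psum_zero, psum_zero]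
      have hk : n - 1 < n := by omega
      have := hf.2.1 (vB ⟨n - 1, hk⟩) (hnext ⟨n - 1, hk⟩)
      rw [flow_B_hnext hf (n - 1) hk] at this
      have h2 : (psum b (n - 1 + 1) : ℝ) ≤ psum a (n - 1 + 1) := by linarith
      have h3 : psum b (n - 1 + 1) ≤ psum a (n - 1 + 1) := by exact_mod_cast h2
      have he : n - 1 + 1 = n := by omega
      rwa [he] at h3
    rw [psum_ge a (by omega), psum_ge b (by omega), ← psum_ge a (le_refl n),
      ← psum_ge b (le_refl n)]
    exact hkey

lemma good_of_unsplittable (hf : f ∈ FHtop n a b) (hu : HUnsplittable n a b f) :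
    Good n a b := by
  refine ⟨dominates_of_flow hf, ?_⟩
  intro i hbi
  have h1 : 0 < f (vB i) (vC i) := by
    rw [flow_BC hf]
    exact_mod_cast hbi
  have h2 : f (vB i) (hnext i) = 0 := by
    by_contra hne
    have hpos : 0 < f (vB i) (hnext i) :=
      lt_of_le_of_ne (hf.2.1 _ _) (Ne.symm hne)
    exact (vC_ne_hnext i i) (hu.1 (vB i) (vC i) (hnext i) h1 hpos)
  have : i = ⟨(i : ℕ), i.isLt⟩ := Fin.ext rfl
  rw [this] at h2
  rw [flow_B_hnext hf (i : ℕ) i.isLt] at h2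
  have : (psum a ((i : ℕ) + 1) : ℝ) = psum b ((i : ℕ) + 1) := by linarith
  exact_mod_cast this

lemma flow_unique (hf : f ∈ FHtop n a b) {g : HVtx n → HVtx n → ℝ}
    (hg : g ∈ FHtop n a b) : f = g := by
  rw [flow_eq_hflow hf, flow_eq_hflow hg]

end Extract

/-! ### The canonical target vector `bOf` -/

noncomputable def supS {n : ℕ} (a j : Fin n → ℕ) (m : ℕ) : ℕ :=
  (Finset.univ.filter fun k : Fin n => (k : ℕ) < m ∧ j k ≠ 0).sup fun k => psum a ((k : ℕ) + 1)

noncomputable def bOf {n : ℕ} (a j : Fin n → ℕ) : Fin n → ℕ :=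
  fun i => if j i = 0 then 0 else psum a ((i : ℕ) + 1) - supS a j (i : ℕ)

lemma supS_le {n : ℕ} (a j : Fin n → ℕ) (m : ℕ) : supS a j m ≤ psum a m := by
  apply Finset.sup_le
  intro k hk
  simp only [Finset.mem_filter] at hk
  exact psum_mono a (by omega)

lemma supS_zero {n : ℕ} (a j : Fin n → ℕ) : supS a j 0 = 0 := by
  unfold supS
  rw [show (Finset.univ.filter fun k : Fin n => (k : ℕ) < 0 ∧ j k ≠ 0) = ∅ by
    apply Finset.filter_false_of_mem; intro k _; simp]
  rfl

lemma supS_succ_lt {n : ℕ} (a j : Fin n → ℕ) {m : ℕ} (h : m < n) :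
    supS a j (m + 1) =
      if j ⟨m, h⟩ = 0 then supS a j m else max (supS a j m) (psum a (m + 1)) := by
  have hv : ((⟨m, h⟩ : Fin n) : ℕ) = m := rfl
  unfold supS
  split
  · rename_i hjm
    congr 1
    apply Finset.filter_congr
    intro k _
    constructor
    · rintro ⟨h1, h2⟩
      refine ⟨?_, h2⟩
      rcases Nat.lt_or_ge (k : ℕ) m with h3 | h3
      · exact h3
      · exfalso
        have : k = ⟨m, h⟩ := Fin.ext (by omega)
        rw [this] at h2
        exact h2 hjm
    · rintro ⟨h1, h2⟩
      exact ⟨by omega, h2⟩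
  · rename_i hjm
    have hins : (Finset.univ.filter fun k : Fin n => (k : ℕ) < m + 1 ∧ j k ≠ 0) =
        insert ⟨m, h⟩ (Finset.univ.filter fun k : Fin n => (k : ℕ) < m ∧ j k ≠ 0) := by
      ext k
      simp only [Finset.mem_filter, Finset.mem_insert, Finset.mem_univ, true_and]
      constructor
      · rintro ⟨h1, h2⟩
        rcases Nat.lt_or_ge (k : ℕ) m with h3 | h3
        · exact Or.inr ⟨h3, h2⟩
        · exact Or.inl (Fin.ext (by omega))
      · rintro (h1 | ⟨h1, h2⟩)
        · exact ⟨by rw [h1]; omega, by rw [h1]; exact hjm⟩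
        · exact ⟨by omega, h2⟩
    rw [hins, Finset.sup_insert]
    rw [Nat.max_comm]

lemma supS_succ_ge {n : ℕ} (a j : Fin n → ℕ) {m : ℕ} (h : n ≤ m) :
    supS a j (m + 1) = supS a j m := by
  unfold supS
  congr 1
  apply Finset.filter_congr
  intro k _
  have := k.isLt
  constructor
  · rintro ⟨_, h2⟩; exact ⟨by omega, h2⟩
  · rintro ⟨_, h2⟩; exact ⟨by omega, h2⟩

lemma psum_bOf {n : ℕ} (a j : Fin n → ℕ) : ∀ m, psum (bOf a j) m = supS a j m := by
  intro m
  induction m with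
  | zero => rw [psum_zero, supS_zero]
  | succ m ih =>
    rw [psum_succ']
    split
    · rename_i h
      rw [supS_succ_lt a j h, ih]
      show supS a j m + bOf a j ⟨m, h⟩ = _
      have hv : ((⟨m, h⟩ : Fin n) : ℕ) = m := rfl
      have h1 : supS a j m ≤ psum a (m + 1) :=
        le_trans (supS_le a j m) (psum_mono a (by omega))
      unfold bOf
      split
      · omega
      · rw [hv, max_eq_right h1]
        omega
    · rename_i h
      rw [add_zero, ih, supS_succ_ge a j (by omega)]

lemma good_bOf {n : ℕ} (a j : Fin n → ℕ) : Good n a (bOf a j) := by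
  constructor
  · intro m
    rw [psum_bOf]
    exact supS_le a j m
  · intro i hbi
    have hji : j i ≠ 0 := by
      intro hj0
      unfold bOf at hbi
      rw [if_pos hj0] at hbi
      omega
    rw [psum_bOf, supS_succ_lt a j i.isLt]
    rw [if_neg (by simpa using hji)]
    have h1 : supS a j (i : ℕ) ≤ psum a ((i : ℕ) + 1) :=
      le_trans (supS_le a j _) (psum_mono a (by omega))
    omega

/-! ### Positivity of `bOf` via pigeonhole, and uniqueness -/

lemma key_pos {n : ℕ} {a j : Fin n → ℕ} (hdz : DomZle 1 (chi a) j)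
    (i : Fin n) (hji : j i ≠ 0) : supS a j (i : ℕ) < psum a ((i : ℕ) + 1) := by
  obtain ⟨-, -, φ, hinj, hφ⟩ := hdz
  set Pset := Finset.univ.filter fun k : Fin n => (k : ℕ) < (i : ℕ) ∧ j k ≠ 0 with hPset
  rcases Pset.eq_empty_or_nonempty with hP | hP
  · -- no previous one-position of j
    rw [show supS a j (i : ℕ) = 0 by unfold supS; rw [← hPset, hP]; rfl]
    by_contra hcon
    push_neg at hcon
    have hall : ∀ k : Fin n, (k : ℕ) ≤ (i : ℕ) → a k = 0 := by
      intro k hk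
      have := le_psum a (m := (i : ℕ) + 1) (k := k) (by omega)
      omega
    have hmap : ∀ k ∈ Finset.Iic i, φ k ∈ Finset.Iio i := by
      intro k hk
      rw [Finset.mem_Iic] at hk
      have hak : chi a k = 0 := (chi_eq_zero_iff a k).mpr (hall k hk)
      obtain ⟨hjφ, hle, _⟩ := hφ k hak
      rw [Finset.mem_Iio]
      have : φ k ≠ i := fun hh => hji (hh ▸ hjφ)
      rw [Fin.lt_def]
      have : (φ k : ℕ) ≠ (i : ℕ) := fun hh => this (Fin.ext hh)
      have hki : (k : ℕ) ≤ (i : ℕ) := hk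
      omega
    have hcard := Finset.card_le_card_of_injOn φ hmap ?_
    · rw [Fin.card_Iic, Fin.card_Iio] at hcard
      omega
    · intro x hx y hy hxy
      rw [Finset.coe_Iic, Set.mem_Iic] at hx hy
      exact hinj ((chi_eq_zero_iff a x).mpr (hall x hx)) ((chi_eq_zero_iff a y).mpr (hall y hy)) hxy
  · -- there is a previous one-position p
    set p := Pset.max' hP with hpdef
    have hpmem : p ∈ Pset := Pset.max'_mem hP
    have hpP : (p : ℕ) < (i : ℕ) ∧ j p ≠ 0 := by
      have := hpmem
      rw [hPset, Finset.mem_filter] at this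
      exact this.2
    have hpmax : ∀ k : Fin n, (k : ℕ) < (i : ℕ) → j k ≠ 0 → (k : ℕ) ≤ (p : ℕ) := by
      intro k h1 h2
      have hk : k ∈ Pset := by rw [hPset, Finset.mem_filter]; exact ⟨Finset.mem_univ _, h1, h2⟩
      exact Pset.le_max' k hk
    -- a witness with positive a-entry in (p, i]
    have hwit : ∃ k : Fin n, (p : ℕ) < (k : ℕ) ∧ (k : ℕ) ≤ (i : ℕ) ∧ a k ≠ 0 := by
      by_contra hcon
      push_neg at hcon
      have hall : ∀ k : Fin n, (p : ℕ) < (k : ℕ) → (k : ℕ) ≤ (i : ℕ) → a k = 0 := by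
        intro k h1 h2
        exact hcon k h1 h2
      have hmap : ∀ k ∈ Finset.Ioc p i, φ k ∈ Finset.Ioo p i := by
        intro k hk
        rw [Finset.mem_Ioc] at hk
        have hk1 : (p : ℕ) < (k : ℕ) := hk.1
        have hk2 : (k : ℕ) ≤ (i : ℕ) := hk.2
        have hak : chi a k = 0 := (chi_eq_zero_iff a k).mpr (hall k hk1 hk2)
        obtain ⟨hjφ, hle, hge⟩ := hφ k hak
        rw [Finset.mem_Ioo, Fin.lt_def, Fin.lt_def]
        have hne1 : (φ k : ℕ) ≠ (p : ℕ) := by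
          intro hh
          exact hpP.2 (Fin.ext hh ▸ hjφ)
        have hne2 : (φ k : ℕ) ≠ (i : ℕ) := by
          intro hh
          exact hji (Fin.ext hh ▸ hjφ)
        omega
      have hcard := Finset.card_le_card_of_injOn φ hmap ?_
      · rw [Fin.card_Ioc, Fin.card_Ioo] at hcard
        have := hpP.1
        omega
      · intro x hx y hy hxy
        rw [Finset.coe_Ioc, Set.mem_Ioc] at hx hy
        exact hinj ((chi_eq_zero_iff a x).mpr (hall x hx.1 hx.2))
          ((chi_eq_zero_iff a y).mpr (hall y hy.1 hy.2)) hxy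
    obtain ⟨k0, hk1, hk2, hk3⟩ := hwit
    have hstep : psum a ((p : ℕ) + 1) < psum a ((i : ℕ) + 1) := by
      have h1 : psum a ((p : ℕ) + 1) ≤ psum a (k0 : ℕ) := psum_mono a (by omega)
      have h2 : psum a ((k0 : ℕ) + 1) = psum a (k0 : ℕ) + a k0 := psum_succ a k0
      have h3 : psum a ((k0 : ℕ) + 1) ≤ psum a ((i : ℕ) + 1) := psum_mono a (by omega)
      omega
    have hsup : supS a j (i : ℕ) ≤ psum a ((p : ℕ) + 1) := by
      apply Finset.sup_le
      intro k hk
      rw [Finset.mem_filter] at hk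
      have := hpmax k hk.2.1 hk.2.2
      exact psum_mono a (by omega)
    omega

lemma chi_bOf {n : ℕ} {a j : Fin n → ℕ} (hj : ∀ i, j i ≤ 1)
    (hdz : DomZle 1 (chi a) j) : chi (bOf a j) = j := by
  funext i
  unfold chi bOf
  by_cases hji : j i = 0
  · rw [if_pos hji, if_pos rfl]
    exact hji.symm
  · rw [if_neg hji, if_neg (by have := key_pos hdz i hji; omega)]
    have := hj i
    omega

lemma psum_good_eq {n : ℕ} {a b j : Fin n → ℕ} (hchi : chi b = j) (hg : Good n a b) :
    ∀ m, psum b m = supS a j m := by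
  intro m
  induction m with
  | zero => rw [psum_zero, supS_zero]
  | succ m ih =>
    rw [psum_succ']
    split
    · rename_i h
      rw [supS_succ_lt a j h, ih]
      have hv : ((⟨m, h⟩ : Fin n) : ℕ) = m := rfl
      have hchim : chi b ⟨m, h⟩ = j ⟨m, h⟩ := by rw [hchi]
      split
      · rename_i hjm
        have hbz : b ⟨m, h⟩ = 0 := by
          rw [hjm] at hchim
          exact (chi_eq_zero_iff b _).mp hchim
        omega
      · rename_i hjm
        have hbz : b ⟨m, h⟩ ≠ 0 := by
          intro hz
          apply hjm
          rw [← hchim, (chi_eq_zero_iff b _).mpr hz]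
        have hps := hg.2 ⟨m, h⟩ (by omega)
        rw [hv] at hps
        rw [psum_succ b ⟨m, h⟩, hv] at hps
        have h1 : supS a j m ≤ psum a (m + 1) :=
          le_trans (supS_le a j m) (psum_mono a (by omega))
        have h2 : psum b m ≤ supS a j m := le_of_eq ih
        rw [max_eq_right h1]
        omega
    · rename_i h
      rw [add_zero, ih, supS_succ_ge a j (by omega)]

lemma good_eq_bOf {n : ℕ} {a b j : Fin n → ℕ} (hchi : chi b = j) (hg : Good n a b) :
    b = bOf a j := by
  funext i
  have h1 := psum_good_eq hchi hg (i : ℕ)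
  have h2 := psum_good_eq hchi hg ((i : ℕ) + 1)
  have h3 := psum_bOf a j (i : ℕ)
  have h4 := psum_bOf a j ((i : ℕ) + 1)
  have h5 := psum_succ b i
  have h6 := psum_succ (bOf a j) i
  omega

/-! ### Construction of the zero-matching for part (3) -/

def Pbad {n : ℕ} (a b : Fin n → ℕ) (i : Fin n) : Prop :=
  ∃ i' : Fin n, (i : ℕ) ≤ (i' : ℕ) ∧ b i' ≠ 0 ∧
    ∀ k : Fin n, (i : ℕ) ≤ (k : ℕ) → (k : ℕ) ≤ (i' : ℕ) → a k = 0

lemma pbad_key {n : ℕ} {a b : Fin n → ℕ} (hg : Good n a b) (i : Fin n)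
    (hai : a i = 0) (hP : Pbad a b i) :
    0 < (i : ℕ) ∧ ∀ h : (i : ℕ) - 1 < n, b ⟨(i : ℕ) - 1, h⟩ = 0 := by
  obtain ⟨i', hle, hbi', hz⟩ := hP
  have hgood := hg.2 i' (by omega)
  have hipos : 0 < (i : ℕ) := by
    by_contra hcon
    push_neg at hcon
    have h0 : (i : ℕ) = 0 := by omega
    have hps : psum a ((i' : ℕ) + 1) = 0 := by
      rw [psum_eq_of_zero_between a (Nat.zero_le _)
        (fun k h1 h2 => hz k (by omega) (by omega)), psum_zero]
    have hlep := le_psum b (m := (i' : ℕ) + 1) (k := i') (by omega)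
    omega
  refine ⟨hipos, fun h => ?_⟩
  by_contra hbprev
  set i1 : Fin n := ⟨(i : ℕ) - 1, h⟩ with hi1
  have hv : (i1 : ℕ) + 1 = (i : ℕ) := by simp [hi1]; omega
  have hgood1 := hg.2 i1 (by omega)
  rw [hv] at hgood1
  have hconst : psum a ((i' : ℕ) + 1) = psum a (i : ℕ) := by
    apply psum_eq_of_zero_between a (by omega)
    intro k h1 h2
    exact hz k h1 (by omega)
  have hsucc : psum b ((i' : ℕ) + 1) = psum b (i' : ℕ) + b i' := psum_succ b i'
  have hmono : psum b (i : ℕ) ≤ psum b (i' : ℕ) := psum_mono b (by omega)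
  omega

noncomputable def phiOf {n : ℕ} (a b : Fin n → ℕ) : Fin n → Fin n := fun i =>
  if h : (Pbad a b i ∧ a i = 0) ∧ 0 < (i : ℕ) then
    ⟨(i : ℕ) - 1, by have := i.isLt; omega⟩
  else i

lemma phiOf_spec {n : ℕ} {a b : Fin n → ℕ} (hg : Good n a b) (i : Fin n)
    (hai : a i = 0) :
    chi b (phiOf a b i) = 0 ∧ (phiOf a b i : ℕ) ≤ (i : ℕ) ∧
      (i : ℕ) ≤ (phiOf a b i : ℕ) + 1 := by
  unfold phiOf
  split
  · rename_i hcond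
    have hk := pbad_key hg i hai hcond.1.1
    refine ⟨(chi_eq_zero_iff b _).mpr (hk.2 _), ?_, ?_⟩
    · show (i : ℕ) - 1 ≤ (i : ℕ)
      omega
    · show (i : ℕ) ≤ (i : ℕ) - 1 + 1
      omega
  · rename_i hcond
    have hnP : ¬ Pbad a b i := by
      intro hP
      exact hcond ⟨⟨hP, hai⟩, (pbad_key hg i hai hP).1⟩
    have hbz : b i = 0 := by
      by_contra hbi
      apply hnP
      refine ⟨i, le_refl _, hbi, fun k h1 h2 => ?_⟩
      have : k = i := Fin.ext (by omega)
      rw [this]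
      exact hai
    exact ⟨(chi_eq_zero_iff b _).mpr hbz, le_refl _, by omega⟩

lemma phiOf_inj {n : ℕ} {a b : Fin n → ℕ} (hg : Good n a b) :
    Set.InjOn (phiOf a b) { i | chi a i = 0 } := by
  intro x hx y hy hxy
  have hax : a x = 0 := (chi_eq_zero_iff a x).mp hx
  have hay : a y = 0 := (chi_eq_zero_iff a y).mp hy
  have main : ∀ u v : Fin n, a u = 0 → a v = 0 →
      ((Pbad a b u ∧ a u = 0) ∧ 0 < (u : ℕ)) →
      ¬ ((Pbad a b v ∧ a v = 0) ∧ 0 < (v : ℕ)) →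
      (v : ℕ) = (u : ℕ) - 1 → False := by
    intro u v hau hav hcu hcv hvv
    obtain ⟨i', hle, hbi', hz⟩ := hcu.1.1
    have hupos : 0 < (u : ℕ) := hcu.2
    have hPv : Pbad a b v := by
      refine ⟨i', by omega, hbi', fun k h1 h2 => ?_⟩
      rcases Nat.eq_or_lt_of_le h1 with h3 | h3
      · have : k = v := Fin.ext h3.symm
        rw [this]; exact hav
      · exact hz k (by omega) h2
    exact hcv ⟨⟨hPv, hav⟩, (pbad_key hg v hav hPv).1⟩
  unfold phiOf at hxy
  split at hxy <;> split at hxy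
  · rename_i h1 h2
    have : (x : ℕ) - 1 = (y : ℕ) - 1 := by
      have := congrArg Fin.val hxy
      simpa using this
    exact Fin.ext (by have := h1.2; have := h2.2; omega)
  · rename_i h1 h2
    exfalso
    have hvv : (y : ℕ) = (x : ℕ) - 1 := by
      have := congrArg Fin.val hxy
      simpa using this.symm
    exact main x y hax hay h1 h2 hvv
  · rename_i h1 h2
    exfalso
    have hvv : (x : ℕ) = (y : ℕ) - 1 := by
      have := congrArg Fin.val hxy
      simpa using this
    exact main y x hay hax h2 h1 hvv
  · exact hxy

lemma dom_chi_of_good {n : ℕ} {a b : Fin n → ℕ} (hg : Good n a b) :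
    Dominates (chi a) (chi b) := by
  intro m
  rw [psum_chi_card, psum_chi_card]
  have hsplit : ∀ u : Fin n → ℕ,
      (Finset.univ.filter fun k : Fin n => (k : ℕ) < m ∧ u k ≠ 0).card +
      (Finset.univ.filter fun k : Fin n => (k : ℕ) < m ∧ u k = 0).card =
      (Finset.univ.filter fun k : Fin n => (k : ℕ) < m).card := by
    intro u
    rw [show (Finset.univ.filter fun k : Fin n => (k : ℕ) < m ∧ u k ≠ 0) =
        (Finset.univ.filter fun k : Fin n => (k : ℕ) < m).filter (fun k => ¬ u k = 0) by
      rw [Finset.filter_filter]]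
    rw [show (Finset.univ.filter fun k : Fin n => (k : ℕ) < m ∧ u k = 0) =
        (Finset.univ.filter fun k : Fin n => (k : ℕ) < m).filter (fun k => u k = 0) by
      rw [Finset.filter_filter]]
    rw [add_comm]
    exact Finset.card_filter_add_card_filter_not _
  have hinj : (Finset.univ.filter fun k : Fin n => (k : ℕ) < m ∧ a k = 0).card ≤
      (Finset.univ.filter fun k : Fin n => (k : ℕ) < m ∧ b k = 0).card := by
    apply Finset.card_le_card_of_injOn (phiOf a b)
    · intro k hk
      rw [Finset.mem_coe, Finset.mem_filter] at hk ⊢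
      obtain ⟨-, hkm, hak⟩ := hk
      obtain ⟨h1, h2, h3⟩ := phiOf_spec hg k hak
      exact ⟨Finset.mem_univ _, by omega, (chi_eq_zero_iff b _).mp h1⟩
    · intro x hx y hy hxy
      rw [Finset.coe_filter] at hx hy
      exact phiOf_inj hg ((chi_eq_zero_iff a x).mpr hx.2.2)
        ((chi_eq_zero_iff a y).mpr hy.2.2) hxy
  have ha := hsplit a
  have hb := hsplit b
  omega

lemma domZle_of_good {n : ℕ} {a b : Fin n → ℕ} (hg : Good n a b) :
    DomZle 1 (chi a) (chi b) := by
  refine ⟨dom_chi_of_good hg, ?_, phiOf a b, phiOf_inj hg, ?_⟩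
  · rw [chi_chi, chi_chi]
    exact dom_chi_of_good hg
  · intro i hi
    exact phiOf_spec hg i ((chi_eq_zero_iff a i).mp hi)

/-- (1) For every `j ∈ {0,1}^n` with `χ(a) ⊵₁ j` there is a
unique `b ∈ ℕ^n` with `χ(b) = j` such that `F_{H_⊤(n)}(a,b)` contains an
unsplittable flow, and for this `b` the unsplittable flow is unique.
(2) Conversely, if `F_{H_⊤(n)}(a,b)` contains an unsplittable flow then
`χ(a) ⊵₁ χ(b)` (and `b` is the unique vector from (1) for `j = χ(b)`). -/
theorem statement10 (n : ℕ) (hn : 0 < n) (a : Fin n → ℕ) :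
    (∀ j : Fin n → ℕ, (∀ i, j i ≤ 1) → DomZle 1 (chi a) j →
      ∃! b : Fin n → ℕ, chi b = j ∧ ∃ f ∈ FHtop n a b, HUnsplittable n a b f) ∧
    (∀ j : Fin n → ℕ, (∀ i, j i ≤ 1) → DomZle 1 (chi a) j →
      ∀ b : Fin n → ℕ, chi b = j →
        ∀ f ∈ FHtop n a b, HUnsplittable n a b f →
          ∀ g ∈ FHtop n a b, HUnsplittable n a b g → f = g) ∧
    (∀ b : Fin n → ℕ, (∃ f ∈ FHtop n a b, HUnsplittable n a b f) →
      DomZle 1 (chi a) (chi b)) := by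
  refine ⟨?_, ?_, ?_⟩
  · intro j hj hdz
    refine ⟨bOf a j, ⟨chi_bOf hj hdz, hflow n a (bOf a j),
      hflow_mem hn (good_bOf a j), hflow_unsplittable (good_bOf a j)⟩, ?_⟩
    rintro b' ⟨hchi', f, hf, hfu⟩
    exact good_eq_bOf hchi' (good_of_unsplittable hf hfu)
  · intro j _ _ b _ f hf _ g hg _
    exact flow_unique hf hg
  · rintro b ⟨f, hf, hfu⟩
    exact domZle_of_good (good_of_unsplittable hf hfu)

end GPS
end

section
/- Let n be a positive integer, a, b ∈ {0,1}^n, and m a positive integer. Then: (1) if ((A_n)^m)_{a,b} > 0, then ((A_n)^{m+1})_{a,b} > 0; and (2) ((A_n)^m)_{a,b} > 0 if and only if a ⊵ b and z(a,b) ≤ m (i.e., a ⊵_z b for some z ≤ m). -/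
open scoped BigOperators Classical

namespace GPS

/-! ### Auxiliary lemmas for Statement 13 -/

lemma psum_eq_card {n : ℕ} (u : Fin n → ℕ) (hu : ∀ i, u i ≤ 1) (t : ℕ) :
    psum u t = (Finset.univ.filter fun k : Fin n => (k : ℕ) < t ∧ u k ≠ 0).card := by
  rw [Finset.card_filter, psum]
  refine Finset.sum_congr rfl fun k _ => ?_
  have := hu k
  split_ifs <;> omega

lemma psum_add_zcount {n : ℕ} (u : Fin n → ℕ) (hu : ∀ i, u i ≤ 1) (t : ℕ) :
    psum u t + (Finset.univ.filter fun k : Fin n => (k : ℕ) < t ∧ u k = 0).card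
      = (Finset.univ.filter fun k : Fin n => (k : ℕ) < t).card := by
  rw [psum_eq_card u hu, Finset.card_filter, Finset.card_filter, Finset.card_filter,
    ← Finset.sum_add_distrib]
  refine Finset.sum_congr rfl fun k _ => ?_
  split_ifs <;> omega

lemma dominates_of_inj {n : ℕ} (u w : Fin n → ℕ) (hu : ∀ i, u i ≤ 1) (hw : ∀ i, w i ≤ 1)
    (ψ : Fin n → Fin n) (hinj : Set.InjOn ψ { i | u i = 0 })
    (h : ∀ i, u i = 0 → w (ψ i) = 0 ∧ (ψ i : ℕ) ≤ (i : ℕ)) : Dominates u w := by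
  intro t
  have key : (Finset.univ.filter fun k : Fin n => (k : ℕ) < t ∧ u k = 0).card
      ≤ (Finset.univ.filter fun k : Fin n => (k : ℕ) < t ∧ w k = 0).card := by
    refine Finset.card_le_card_of_injOn ψ ?_ ?_
    · intro k hk
      rw [Finset.mem_coe, Finset.mem_filter] at hk ⊢
      obtain ⟨-, hk1, hk2⟩ := hk
      have hk3 := (h k hk2).2
      exact ⟨Finset.mem_univ _, by omega, (h k hk2).1⟩
    · intro x hx y hy hxy
      rw [Finset.coe_filter] at hx hy
      exact hinj hx.2.2 hy.2.2 hxy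
  have h1 := psum_add_zcount u hu t
  have h2 := psum_add_zcount w hw t
  omega

lemma chi_eq_self {n : ℕ} (u : Fin n → ℕ) (hu : ∀ i, u i ≤ 1) : chi u = u := by
  funext i
  have := hu i
  simp only [chi]
  split_ifs <;> omega

lemma domZle_of_matching {n z : ℕ} (u w : Fin n → ℕ) (hu : ∀ i, u i ≤ 1) (hw : ∀ i, w i ≤ 1)
    (ψ : Fin n → Fin n) (hinj : Set.InjOn ψ { i | u i = 0 })
    (h : ∀ i, u i = 0 → w (ψ i) = 0 ∧ (ψ i : ℕ) ≤ (i : ℕ) ∧ (i : ℕ) ≤ (ψ i : ℕ) + z) :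
    DomZle z u w := by
  have hdom : Dominates u w :=
    dominates_of_inj u w hu hw ψ hinj fun i hi => ⟨(h i hi).1, (h i hi).2.1⟩
  exact ⟨hdom, by rw [chi_eq_self u hu, chi_eq_self w hw]; exact hdom, ψ, hinj, h⟩

lemma DomZle.mono {n z z' : ℕ} {u w : Fin n → ℕ} (hzz : z ≤ z') (h : DomZle z u w) :
    DomZle z' u w := by
  obtain ⟨h1, h2, φ, h3, h4⟩ := h
  exact ⟨h1, h2, φ, h3, fun i hi => ⟨(h4 i hi).1, (h4 i hi).2.1, le_trans (h4 i hi).2.2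
    (by omega)⟩⟩

lemma DomZle.refl {n z : ℕ} (u : Fin n → ℕ) : DomZle z u u :=
  ⟨fun i => le_refl _, fun i => le_refl _, fun i => i, fun x _ y _ h => h,
    fun i hi => ⟨hi, le_refl _, Nat.le_add_right _ _⟩⟩

lemma DomZle.trans {n z₁ z₂ : ℕ} {u v w : Fin n → ℕ} (h1 : DomZle z₁ u v)
    (h2 : DomZle z₂ v w) : DomZle (z₁ + z₂) u w := by
  obtain ⟨ha1, ha2, φ₁, ha3, ha4⟩ := h1
  obtain ⟨hb1, hb2, φ₂, hb3, hb4⟩ := h2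
  refine ⟨fun i => le_trans (hb1 i) (ha1 i), fun i => le_trans (hb2 i) (ha2 i),
    fun i => φ₂ (φ₁ i), ?_, ?_⟩
  · intro x hx y hy hxy
    have hx' : v (φ₁ x) = 0 := (ha4 x hx).1
    have hy' : v (φ₁ y) = 0 := (ha4 y hy).1
    exact ha3 hx hy (hb3 hx' hy' hxy)
  · intro i hi
    have c1 := ha4 i hi
    have c2 := hb4 (φ₁ i) c1.1
    refine ⟨c2.1, ?_, ?_⟩
    · show (φ₂ (φ₁ i) : ℕ) ≤ (i : ℕ)
      omega
    · show (i : ℕ) ≤ (φ₂ (φ₁ i) : ℕ) + (z₁ + z₂)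
      omega

lemma aux_num (a b c d : ℕ) (h1 : a < b) (h2 : d < c) :
    a * c + b * d + 1 ≤ a * d + b * c := by
  obtain ⟨p, hp⟩ : ∃ p, b = a + p + 1 := ⟨b - a - 1, by omega⟩
  obtain ⟨q, hq⟩ : ∃ q, c = d + q + 1 := ⟨c - d - 1, by omega⟩
  subst hp hq
  ring_nf
  nlinarith [Nat.zero_le (p * q)]

lemma swap_step {n : ℕ} (u w : Fin n → ℕ) (z : ℕ) (ψ : Fin n → Fin n)
    (h1 : Set.InjOn ψ { i | u i = 0 })
    (h2 : ∀ i, u i = 0 → w (ψ i) = 0 ∧ (ψ i : ℕ) ≤ (i : ℕ) ∧ (i : ℕ) ≤ (ψ i : ℕ) + z)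
    (i j : Fin n) (hi : u i = 0) (hj : u j = 0) (hij : i < j) (hinv : (ψ j : ℕ) ≤ (ψ i : ℕ)) :
    ∃ ψ' : Fin n → Fin n, Set.InjOn ψ' { i | u i = 0 } ∧
      (∀ i, u i = 0 → w (ψ' i) = 0 ∧ (ψ' i : ℕ) ≤ (i : ℕ) ∧ (i : ℕ) ≤ (ψ' i : ℕ) + z) ∧
      (∑ t ∈ Finset.univ.filter (fun t : Fin n => u t = 0), (t : ℕ) * (ψ t : ℕ)) + 1 ≤
        ∑ t ∈ Finset.univ.filter (fun t : Fin n => u t = 0), (t : ℕ) * (ψ' t : ℕ) := by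
  have hne : i ≠ j := ne_of_lt hij
  have hijn : (i : ℕ) < (j : ℕ) := hij
  have hψne : ψ j ≠ ψ i := by
    intro h
    exact hne (h1 hj hi h).symm
  have hψlt : (ψ j : ℕ) < (ψ i : ℕ) :=
    lt_of_le_of_ne hinv (fun h => hψne (Fin.ext h))
  refine ⟨ψ ∘ Equiv.swap i j, ?_, ?_, ?_⟩
  · intro x hx y hy hxy
    have hmem : ∀ t : Fin n, u t = 0 → u (Equiv.swap i j t) = 0 := by
      intro t ht
      rw [Equiv.swap_apply_def]
      split_ifs <;> assumption
    have := h1 (hmem x hx) (hmem y hy) hxy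
    exact (Equiv.swap i j).injective this
  · intro t ht
    rcases eq_or_ne t i with rfl | hti
    · rw [Function.comp_apply, Equiv.swap_apply_left]
      have c2i := h2 t ht
      have c2j := h2 j hj
      exact ⟨c2j.1, by omega, by omega⟩
    · rcases eq_or_ne t j with rfl | htj
      · rw [Function.comp_apply, Equiv.swap_apply_right]
        have c2i := h2 i hi
        have c2j := h2 t ht
        have : (i : ℕ) ≤ (i : ℕ) := le_refl _
        exact ⟨c2i.1, by omega, by omega⟩
      · rw [Function.comp_apply, Equiv.swap_apply_of_ne_of_ne hti htj]
        exact h2 t ht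
  · set Z := Finset.univ.filter (fun t : Fin n => u t = 0) with hZ
    have hiZ : i ∈ Z := by simp [hZ, hi]
    have hjZ : j ∈ Z.erase i := by simp [hZ, hj, hne.symm]
    have hsplit : ∀ f : Fin n → ℕ, ∑ t ∈ Z, f t = f i + (f j + ∑ t ∈ (Z.erase i).erase j, f t) := by
      intro f
      rw [← Finset.add_sum_erase _ f hiZ, ← Finset.add_sum_erase _ f hjZ]
    rw [hsplit, hsplit]
    have htail : ∑ t ∈ (Z.erase i).erase j, (t : ℕ) * ((ψ ∘ Equiv.swap i j) t : ℕ)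
        = ∑ t ∈ (Z.erase i).erase j, (t : ℕ) * (ψ t : ℕ) := by
      refine Finset.sum_congr rfl fun t ht => ?_
      rw [Finset.mem_erase] at ht
      have ht2 := Finset.mem_erase.mp ht.2
      rw [Function.comp_apply, Equiv.swap_apply_of_ne_of_ne ht2.1 ht.1]
    rw [htail]
    simp only [Function.comp_apply, Equiv.swap_apply_left, Equiv.swap_apply_right]
    have key := aux_num (i : ℕ) (j : ℕ) (ψ i : ℕ) (ψ j : ℕ) hijn hψlt
    omega

lemma exists_mono_matching {n : ℕ} (u w : Fin n → ℕ) (z : ℕ) (ψ : Fin n → Fin n)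
    (hinj : Set.InjOn ψ { i | u i = 0 })
    (hc : ∀ i, u i = 0 → w (ψ i) = 0 ∧ (ψ i : ℕ) ≤ (i : ℕ) ∧ (i : ℕ) ≤ (ψ i : ℕ) + z) :
    ∃ ψ' : Fin n → Fin n, Set.InjOn ψ' { i | u i = 0 } ∧
      (∀ i, u i = 0 → w (ψ' i) = 0 ∧ (ψ' i : ℕ) ≤ (i : ℕ) ∧ (i : ℕ) ≤ (ψ' i : ℕ) + z) ∧
      (∀ i j : Fin n, u i = 0 → u j = 0 → i < j → (ψ' i : ℕ) < (ψ' j : ℕ)) := by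
  set Z := Finset.univ.filter (fun t : Fin n => u t = 0) with hZ
  set W : (Fin n → Fin n) → ℕ := fun ψ => ∑ t ∈ Z, (t : ℕ) * (ψ t : ℕ) with hW
  have hbound : ∀ ψ : Fin n → Fin n, W ψ ≤ n * n * n := by
    intro ψ
    calc W ψ ≤ ∑ _t ∈ Z, n * n :=
          Finset.sum_le_sum fun t _ =>
            Nat.mul_le_mul (le_of_lt t.isLt) (le_of_lt (ψ t).isLt)
      _ = Z.card * (n * n) := by rw [Finset.sum_const, smul_eq_mul]
      _ ≤ n * (n * n) := by
          have hcard : Z.card ≤ n := le_trans (Finset.card_filter_le _ _) (by simp)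
          exact Nat.mul_le_mul_right _ hcard
      _ = n * n * n := by ring
  suffices H : ∀ K : ℕ, ∀ ψ : Fin n → Fin n, Set.InjOn ψ { i | u i = 0 } →
      (∀ i, u i = 0 → w (ψ i) = 0 ∧ (ψ i : ℕ) ≤ (i : ℕ) ∧ (i : ℕ) ≤ (ψ i : ℕ) + z) →
      n * n * n ≤ W ψ + K →
      ∃ ψ' : Fin n → Fin n, Set.InjOn ψ' { i | u i = 0 } ∧
        (∀ i, u i = 0 → w (ψ' i) = 0 ∧ (ψ' i : ℕ) ≤ (i : ℕ) ∧ (i : ℕ) ≤ (ψ' i : ℕ) + z) ∧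
        (∀ i j : Fin n, u i = 0 → u j = 0 → i < j → (ψ' i : ℕ) < (ψ' j : ℕ)) by
    exact H (n * n * n) ψ hinj hc (by omega)
  intro K
  induction K with
  | zero =>
      intro ψ h1 h2 hK
      by_cases hinv : ∃ i, u i = 0 ∧ ∃ j, u j = 0 ∧ i < j ∧ (ψ j : ℕ) ≤ (ψ i : ℕ)
      · obtain ⟨i, hi, j, hj, hij, hle⟩ := hinv
        obtain ⟨ψ', -, -, hWlt⟩ := swap_step u w z ψ h1 h2 i j hi hj hij hle
        have := hbound ψ'
        rw [← hZ] at hWlt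
        have hWlt' : W ψ + 1 ≤ W ψ' := hWlt
        omega
      · push_neg at hinv
        refine ⟨ψ, h1, h2, fun i j hi hj hij => ?_⟩
        have := hinv i hi j hj hij
        have hψne : ψ i ≠ ψ j := fun h => ne_of_lt hij (h1 hi hj h)
        have : (ψ i : ℕ) ≠ (ψ j : ℕ) := fun h => hψne (Fin.ext h)
        omega
  | succ K ih =>
      intro ψ h1 h2 hK
      by_cases hinv : ∃ i, u i = 0 ∧ ∃ j, u j = 0 ∧ i < j ∧ (ψ j : ℕ) ≤ (ψ i : ℕ)
      · obtain ⟨i, hi, j, hj, hij, hle⟩ := hinv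
        obtain ⟨ψ', h1', h2', hWlt⟩ := swap_step u w z ψ h1 h2 i j hi hj hij hle
        rw [← hZ] at hWlt
        have hWlt' : W ψ + 1 ≤ W ψ' := hWlt
        exact ih ψ' h1' h2' (by omega)
      · push_neg at hinv
        refine ⟨ψ, h1, h2, fun i j hi hj hij => ?_⟩
        have := hinv i hi j hj hij
        have hψne : ψ i ≠ ψ j := fun h => ne_of_lt hij (h1 hi hj h)
        have : (ψ i : ℕ) ≠ (ψ j : ℕ) := fun h => hψne (Fin.ext h)
        omega

/-- The key step: from `u ⊵_{≤ m+1} w` produce an intermediate `c` with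
`u ⊵₁ c` and `c ⊵_{≤ m} w`, by moving each zero of `u` one step toward its match. -/
lemma domZle_step {n m : ℕ} (u w : Fin n → ℕ) (hu : ∀ i, u i ≤ 1) (hw : ∀ i, w i ≤ 1)
    (h : DomZle (m + 1) u w) :
    ∃ c : Fin n → ℕ, (∀ i, c i ≤ 1) ∧ DomZle 1 u c ∧ DomZle m c w := by
  obtain ⟨-, -, φ₀, hinj₀, hφ₀⟩ := h
  obtain ⟨φ, hinj, hφ, hmono⟩ := exists_mono_matching u w (m + 1) φ₀ hinj₀ hφ₀
  have hψlt : ∀ i : Fin n, max (φ i : ℕ) ((i : ℕ) - 1) < n := by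
    intro i
    have := (φ i).isLt
    have := i.isLt
    omega
  set ψ : Fin n → Fin n := fun i => ⟨max (φ i : ℕ) ((i : ℕ) - 1), hψlt i⟩ with hψ
  have hψval : ∀ i : Fin n, (ψ i : ℕ) = max (φ i : ℕ) ((i : ℕ) - 1) := fun i => rfl
  have hψmono : ∀ i j : Fin n, u i = 0 → u j = 0 → i < j → (ψ i : ℕ) < (ψ j : ℕ) := by
    intro i j hi hj hij
    have h1 := hmono i j hi hj hij
    have h2 : (i : ℕ) < (j : ℕ) := hij
    rw [hψval, hψval]
    omega
  have hψinj : Set.InjOn ψ { i | u i = 0 } := by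
    intro x hx y hy hxy
    rcases lt_trichotomy x y with hlt | heq | hlt
    · have := hψmono x y hx hy hlt
      rw [hxy] at this
      omega
    · exact heq
    · have := hψmono y x hy hx hlt
      rw [hxy] at this
      omega
  set c : Fin n → ℕ := fun k => if ∃ i, u i = 0 ∧ ψ i = k then 0 else 1 with hcdef
  have hc0 : ∀ k, c k = 0 ↔ ∃ i, u i = 0 ∧ ψ i = k := by
    intro k
    simp only [hcdef]
    split_ifs with h
    · simpa using h
    · simpa using h
  have hc1 : ∀ k, c k ≤ 1 := by
    intro k
    simp only [hcdef]
    split_ifs <;> omega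
  refine ⟨c, hc1, ?_, ?_⟩
  · refine domZle_of_matching u c hu hc1 ψ hψinj fun i hi => ?_
    have hφi := hφ i hi
    refine ⟨(hc0 _).2 ⟨i, hi, rfl⟩, ?_, ?_⟩ <;> rw [hψval] <;> omega
  · set ρ : Fin n → Fin n := fun k =>
      if h : ∃ i, u i = 0 ∧ ψ i = k then φ h.choose else k with hρ
    have hρspec : ∀ k : Fin n, c k = 0 →
        ∃ i, u i = 0 ∧ ψ i = k ∧ ρ k = φ i := by
      intro k hk
      have hex : ∃ i, u i = 0 ∧ ψ i = k := (hc0 k).1 hk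
      refine ⟨hex.choose, hex.choose_spec.1, hex.choose_spec.2, ?_⟩
      simp only [hρ, dif_pos hex]
    have hρinj : Set.InjOn ρ { k | c k = 0 } := by
      intro x hx y hy hxy
      obtain ⟨i, hi, hix, hρx⟩ := hρspec x hx
      obtain ⟨j, hj, hjy, hρy⟩ := hρspec y hy
      rw [hρx, hρy] at hxy
      have := hinj hi hj hxy
      rw [← hix, ← hjy, this]
    refine domZle_of_matching c w hc1 hw ρ hρinj fun k hk => ?_
    obtain ⟨i, hi, hik, hρk⟩ := hρspec k hk
    have hφi := hφ i hi
    have hkval : (k : ℕ) = max (φ i : ℕ) ((i : ℕ) - 1) := by rw [← hik, hψval]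
    rw [hρk]
    exact ⟨hφi.1, by omega, by omega⟩

lemma fin2_le_one {n : ℕ} (a : Fin n → Fin 2) : ∀ i, ((a i : ℕ)) ≤ 1 := by
  intro i
  have := (a i).isLt
  omega

lemma An_apply_pos_iff {n : ℕ} (a b : Fin n → Fin 2) :
    0 < An n a b ↔ DomZle 1 (fun i => (a i : ℕ)) (fun i => (b i : ℕ)) := by
  simp only [An, Matrix.of_apply]
  split_ifs with h <;> simp [h]

lemma An_apply_nonneg {n : ℕ} (a b : Fin n → Fin 2) : 0 ≤ An n a b := by
  simp only [An, Matrix.of_apply]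
  split_ifs <;> simp

lemma An_pow_nonneg {n : ℕ} (m : ℕ) (a b : Fin n → Fin 2) : 0 ≤ (An n ^ m) a b := by
  induction m generalizing a b with
  | zero =>
      rw [pow_zero, Matrix.one_apply]
      split_ifs <;> simp
  | succ m ih =>
      rw [pow_succ, Matrix.mul_apply]
      exact Finset.sum_nonneg fun c _ => mul_nonneg (ih a c) (An_apply_nonneg c b)

lemma An_pow_pos_imp {n : ℕ} (m : ℕ) (a b : Fin n → Fin 2)
    (h : 0 < (An n ^ (m + 1)) a b) :
    DomZle (m + 1) (fun i => (a i : ℕ)) (fun i => (b i : ℕ)) := by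
  induction m generalizing a b with
  | zero =>
      rw [pow_one] at h
      exact (An_apply_pos_iff a b).1 h
  | succ m ih =>
      rw [pow_succ, Matrix.mul_apply] at h
      have hex : ∃ c, 0 < (An n ^ (m + 1)) a c * An n c b := by
        by_contra hcon
        push_neg at hcon
        have : (∑ c, (An n ^ (m + 1)) a c * An n c b) ≤ 0 :=
          Finset.sum_nonpos fun c _ => hcon c
        omega
      obtain ⟨c, hc⟩ := hex
      have hAcb : DomZle 1 (fun i => (c i : ℕ)) (fun i => (b i : ℕ)) := by
        by_contra hcon
        have : An n c b = 0 := by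
          simp only [An, Matrix.of_apply, if_neg hcon]
        rw [this, mul_zero] at hc
        omega
      have hleft : 0 < (An n ^ (m + 1)) a c := by
        rcases lt_or_eq_of_le (An_pow_nonneg (m + 1) a c) with h' | h'
        · exact h'
        · rw [← h', zero_mul] at hc; omega
      exact (ih a c hleft).trans hAcb
  
lemma An_imp_pow_pos {n : ℕ} (m : ℕ) (a b : Fin n → Fin 2)
    (h : DomZle (m + 1) (fun i => (a i : ℕ)) (fun i => (b i : ℕ))) :
    0 < (An n ^ (m + 1)) a b := by
  induction m generalizing a b with
  | zero =>
      rw [pow_one]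
      exact (An_apply_pos_iff a b).2 h
  | succ m ih =>
      obtain ⟨c, hc1, hac, hcb⟩ :=
        domZle_step (fun i => ((a i : ℕ))) (fun i => ((b i : ℕ)))
          (fin2_le_one a) (fin2_le_one b) h
      set c₂ : Fin n → Fin 2 := fun i => if c i = 0 then 0 else 1 with hc₂
      have hcoe : (fun i => ((c₂ i : ℕ))) = c := by
        funext i
        have := hc1 i
        simp only [hc₂]
        split_ifs with h' <;> simp [h'] <;> omega
      rw [pow_succ', Matrix.mul_apply]
      refine Finset.sum_pos' (fun d _ => mul_nonneg (An_apply_nonneg a d)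
        (An_pow_nonneg (m + 1) d b)) ⟨c₂, Finset.mem_univ _, ?_⟩
      refine mul_pos ?_ ?_
      · rw [An_apply_pos_iff, hcoe]; exact hac
      · exact ih c₂ b (by rw [hcoe]; exact hcb)

/-- (1) If `((A_n)^m)_{a,b} > 0` then `((A_n)^{m+1})_{a,b} > 0`.
(2) `((A_n)^m)_{a,b} > 0` iff `a ⊵ b` and `z(a,b) ≤ m`, i.e. `a ⊵_z b` for some
`z ≤ m`. -/
theorem statement13 (n : ℕ) (hn : 0 < n) (a b : Fin n → Fin 2) (m : ℕ) (hm : 0 < m) :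
    (0 < (An n ^ m) a b → 0 < (An n ^ (m + 1)) a b) ∧
    (0 < (An n ^ m) a b ↔ DomZle m (fun i => (a i : ℕ)) (fun i => (b i : ℕ))) := by
  obtain ⟨k, rfl⟩ : ∃ k, m = k + 1 := ⟨m - 1, by omega⟩
  refine ⟨fun h => ?_, fun h => An_pow_pos_imp k a b h, fun h => An_imp_pow_pos k a b h⟩
  have hd := An_pow_pos_imp k a b h
  exact An_imp_pow_pos (k + 1) a b (hd.mono (by omega))

end GPS
end
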